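/- arXiv:math/0412222 — 7 statements merged into one kernel-verified Lean document; each statement's English description precedes it below -/
import Mathlib

section
/- For every positive integer n, the coefficient sequence of the polynomial I_n^exc(x) = Σ_{σ∈I_n} x^{exc(σ)} is log-concave: writing a_k for the number of involutions in S_n with exactly k excedances, one has a_k² ≥ a_{k−1}·a_{k+1} for all 0 < k < ⌊n/2⌋. -/
/-!
Adding the transposition `(i j)` to an involution `τ` that fixes `i ≠ j` creates exactly one
new excedance, and every pair (involution with `k + 1` excedances, point of its support) arises
exactly once this way from a pair (involution with `k` excedances, ordered pair of distinct fixed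
points). Since an involution with `k` excedances moves `2k` points, this double counting gives
`2(k + 1) a_{k+1} = (n - 2k)(n - 2k - 1) a_k`. The ratios `a_{k+1} / a_k` therefore decrease
in `k`, which is log-concavity.
-/

noncomputable section
open Finset

/-- The set of involutions in the symmetric group on `Fin n`. -/
def Invols (n : ℕ) : Finset (Equiv.Perm (Fin n)) :=
  Finset.univ.filter (fun σ => σ * σ = 1)

/-- The number of excedances of a permutation of `Fin n`. -/
def excStat {n : ℕ} (σ : Equiv.Perm (Fin n)) : ℕ :=
  (Finset.univ.filter (fun i : Fin n => i < σ i)).card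

/-- The number of involutions in `S_n` with exactly `k` excedances. -/
def excCount (n k : ℕ) : ℕ :=
  ((Invols n).filter (fun σ => excStat σ = k)).card

theorem mul_le_sq_of_succ_mul_eq_mul {R : Type*} [CommSemiring R] [LinearOrder R]
    [IsStrictOrderedRing R] {a c d : ℕ → R} (ha : ∀ k, 0 ≤ a k) (hc : ∀ k, 0 < c k)
    (hcd : ∀ k, d (k + 1) * c k ≤ d k * c (k + 1)) (hrec : ∀ k, a (k + 1) * c k = a k * d k)
    (k : ℕ) : a k * a (k + 2) ≤ a (k + 1) ^ 2 := by
  refine le_of_mul_le_mul_right ?_ (mul_pos (hc k) (hc (k + 1)))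
  calc a k * a (k + 2) * (c k * c (k + 1))
      = a (k + 1) * a k * (d (k + 1) * c k) := by linear_combination (a k * c k) * hrec (k + 1)
    _ ≤ a (k + 1) * a k * (d k * c (k + 1)) :=
        mul_le_mul_of_nonneg_left (hcd k) (mul_nonneg (ha _) (ha _))
    _ = a (k + 1) ^ 2 * (c k * c (k + 1)) := by
        linear_combination (a (k + 1) * c (k + 1)) * (hrec k).symm

theorem Commute.mul_self_eq_one {M : Type*} [Monoid M] {a b : M} (h : Commute a b)
    (ha : a * a = 1) (hb : b * b = 1) : a * b * (a * b) = 1 := by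
  rw [h.symm.mul_mul_mul_comm, ha, hb, one_mul]

namespace Equiv.Perm

variable {α : Type*}

theorem apply_apply_of_mul_self_eq_one {σ : Perm α} (h : σ * σ = 1) (x : α) :
    σ (σ x) = x := by
  simpa using congr($h x)

variable [DecidableEq α]

theorem commute_swap_of_swap_apply_eq {σ : Perm α} {i j : α}
    (h : swap (σ i) (σ j) = swap i j) : Commute σ (swap i j) := by
  rw [Commute, SemiconjBy, mul_swap_eq_swap_mul, h]

theorem mul_swap_mul_self_eq_one_of_fixed {τ : Perm α} (h : τ * τ = 1) {i j : α}
    (hi : τ i = i) (hj : τ j = j) : τ * swap i j * (τ * swap i j) = 1 :=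
  (commute_swap_of_swap_apply_eq (by rw [hi, hj])).mul_self_eq_one h (swap_mul_self i j)

theorem mul_swap_apply_mul_self_eq_one {σ : Perm α} (h : σ * σ = 1) (i : α) :
    σ * swap i (σ i) * (σ * swap i (σ i)) = 1 := by
  have hcomm : Commute σ (swap i (σ i)) :=
    commute_swap_of_swap_apply_eq (by rw [apply_apply_of_mul_self_eq_one h, swap_comm])
  exact hcomm.mul_self_eq_one h (swap_mul_self i (σ i))

end Equiv.Perm

open Equiv Equiv.Perm

section Excedances

variable {n : ℕ}

theorem card_support_eq_two_mul_excStat {σ : Perm (Fin n)} (h : σ * σ = 1) :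
    #σ.support = 2 * excStat σ := by
  have hsupport :
      σ.support = univ.filter (fun i => i < σ i) ∪ univ.filter (fun i => σ i < i) := by
    ext i
    simp [ne_comm, lt_or_lt_iff_ne]
  -- `σ` exchanges the points it moves up with those it moves down.
  have hdown : #(univ.filter fun i => σ i < i) = excStat σ :=
    card_nbij' σ σ (fun i hi => by simpa [apply_apply_of_mul_self_eq_one h] using hi)
      (fun i hi => by simpa [excStat, apply_apply_of_mul_self_eq_one h] using hi)
      (fun i _ => apply_apply_of_mul_self_eq_one h i)
      (fun i _ => apply_apply_of_mul_self_eq_one h i)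
  rw [hsupport, card_union_of_disjoint (disjoint_filter.2 fun _ _ h => h.asymm), hdown, excStat]
  ring

theorem excStat_mul_swap_of_lt {τ : Perm (Fin n)} {i j : Fin n} (hij : i < j)
    (hi : τ i = i) (hj : τ j = j) : excStat (τ * swap i j) = excStat τ + 1 := by
  have hfilter :
      (univ.filter fun x => x < (τ * swap i j) x) = insert i (univ.filter fun x => x < τ x) := by
    ext x
    rw [mem_filter, mem_insert, mem_filter]
    by_cases hxi : x = i
    · simp [hxi, hj, hij]
    by_cases hxj : x = j
    · simp [hxj, hi, hj, hij.not_gt, hij.ne']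
    · simp [swap_apply_of_ne_of_ne hxi hxj, hxi]
  rw [excStat, hfilter, card_insert_of_notMem (by simp [hi]), excStat]

theorem excStat_mul_swap {τ : Perm (Fin n)} {i j : Fin n} (hij : i ≠ j)
    (hi : τ i = i) (hj : τ j = j) : excStat (τ * swap i j) = excStat τ + 1 := by
  rcases hij.lt_or_gt with hlt | hgt
  · exact excStat_mul_swap_of_lt hlt hi hj
  · rw [swap_comm]
    exact excStat_mul_swap_of_lt hgt hj hi

end Excedances

def excInvols (n k : ℕ) : Finset (Perm (Fin n)) :=
  (Invols n).filter fun σ => excStat σ = k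

theorem mem_excInvols {n k : ℕ} {σ : Perm (Fin n)} :
    σ ∈ excInvols n k ↔ σ * σ = 1 ∧ excStat σ = k := by
  simp [excInvols, Invols]

theorem card_sigma_support (n k : ℕ) :
    #((excInvols n k).sigma fun σ => σ.support) = excCount n k * (2 * k) := by
  rw [card_sigma, sum_const_nat fun σ hσ => ?_]
  · rfl
  obtain ⟨hσ, hexc⟩ := mem_excInvols.1 hσ
  rw [card_support_eq_two_mul_excStat hσ, hexc]

theorem card_sigma_offDiag_fixedPoints (n k : ℕ) :
    #((excInvols n k).sigma fun τ => τ.supportᶜ.offDiag) =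
      excCount n k * ((n - 2 * k) * (n - 2 * k - 1)) := by
  rw [card_sigma, sum_const_nat fun τ hτ => ?_]
  · rfl
  obtain ⟨hτ, hexc⟩ := mem_excInvols.1 hτ
  rw [offDiag_card, card_compl, Fintype.card_fin, card_support_eq_two_mul_excStat hτ, hexc,
    Nat.mul_sub_one]

theorem card_sigma_support_eq_card_sigma_offDiag (n k : ℕ) :
    #((excInvols n (k + 1)).sigma fun σ => σ.support) =
      #((excInvols n k).sigma fun τ => τ.supportᶜ.offDiag) := by
  refine card_nbij' (fun p => ⟨p.1 * swap p.2 (p.1 p.2), (p.2, p.1 p.2)⟩)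
    (fun q => ⟨q.1 * swap q.2.1 q.2.2, q.2.1⟩) ?_ ?_ ?_ ?_
  · rintro ⟨σ, i⟩ hp
    simp only [coe_sigma, Set.mem_sigma_iff, mem_coe, mem_excInvols, mem_support] at hp ⊢
    obtain ⟨⟨hσ, hexc⟩, hi⟩ := hp
    have hτi : (σ * swap i (σ i)) i = i := by simp [apply_apply_of_mul_self_eq_one hσ]
    have hτj : (σ * swap i (σ i)) (σ i) = σ i := by simp
    have hexc' := excStat_mul_swap (Ne.symm hi) hτi hτj
    rw [mul_swap_mul_self, hexc] at hexc'
    refine ⟨⟨mul_swap_apply_mul_self_eq_one hσ i, by omega⟩, ?_⟩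
    simp [mem_offDiag, hτi, hτj, Ne.symm hi]
  · rintro ⟨τ, i, j⟩ hq
    simp only [coe_sigma, Set.mem_sigma_iff, mem_coe, mem_excInvols, mem_support, mem_offDiag,
      mem_compl, not_not] at hq ⊢
    obtain ⟨⟨hτ, hexc⟩, hi, hj, hij⟩ := hq
    refine ⟨⟨mul_swap_mul_self_eq_one_of_fixed hτ hi hj, ?_⟩, by simpa [hj] using hij.symm⟩
    rw [excStat_mul_swap hij hi hj, hexc]
  · rintro ⟨σ, i⟩ -
    simp [mul_assoc]
  · rintro ⟨τ, i, j⟩ hq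
    simp only [coe_sigma, Set.mem_sigma_iff, mem_coe, mem_excInvols, mem_support, mem_offDiag,
      mem_compl, not_not] at hq
    simp [mul_assoc, hq.2.2.1]

theorem excCount_succ_mul (n k : ℕ) :
    excCount n (k + 1) * (2 * (k + 1)) = excCount n k * ((n - 2 * k) * (n - 2 * k - 1)) := by
  rw [← card_sigma_support, card_sigma_support_eq_card_sigma_offDiag,
    card_sigma_offDiag_fixedPoints]

theorem excedance_log_concave_general (n : ℕ) (k : ℕ) (hk0 : 0 < k) :
    excCount n (k - 1) * excCount n (k + 1) ≤ excCount n k ^ 2 := by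
  obtain ⟨j, rfl⟩ := Nat.exists_eq_add_of_lt hk0
  have hratio : ∀ i, (n - 2 * (i + 1)) * (n - 2 * (i + 1) - 1) * (2 * (i + 1)) ≤
      (n - 2 * i) * (n - 2 * i - 1) * (2 * (i + 1 + 1)) := fun i =>
    Nat.mul_le_mul (Nat.mul_le_mul (by omega) (by omega)) (by omega)
  simpa using mul_le_sq_of_succ_mul_eq_mul (fun _ => Nat.zero_le _) (fun _ => by positivity)
    hratio (excCount_succ_mul n) j

theorem excedance_log_concave (n : ℕ) (hn : 1 ≤ n) (k : ℕ) (hk0 : 0 < k)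
    (hk1 : k < n / 2) :
    excCount n (k - 1) * excCount n (k + 1) ≤ excCount n k ^ 2 :=
  excedance_log_concave_general n k hk0
end
end

section
/- For every positive integer n, the coefficient sequence of the polynomial Σ_{σ∈I_n} x^{wexc(σ)} is log-concave: writing b_k for the number of involutions in S_n with exactly k weak excedances, one has b_k² ≥ b_{k−1}·b_{k+1} for all interior indices k. -/
noncomputable section
open Finset

/-- The number of weak excedances of a permutation of `Fin n`. -/
def wexcStat {n : ℕ} (σ : Equiv.Perm (Fin n)) : ℕ :=
  (Finset.univ.filter (fun i : Fin n => i ≤ σ i)).card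

/-- The number of involutions in `S_n` with exactly `k` weak excedances. -/
def wexcCount (n k : ℕ) : ℕ :=
  ((Invols n).filter (fun σ => wexcStat σ = k)).card

/-!
For an involution `σ`, the map `σ` exchanges `{i | i ≤ σ i}` and `{i | σ i ≤ i}`, whose union is
everything and whose intersection is the set of fixed points; hence `wexc σ = n - c`, where `c` is
the number of 2-cycles of `σ`. So `b_k` counts the permutations of cycle type `2^(n-k)`, and the
orbit-stabiliser count of a cycle type gives `b_k * ((2k - n)! * 2^(n-k) * (n-k)!) = n!`.
Log-concavity of `b` is thus log-convexity of these centraliser orders, which comes from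
log-convexity of the factorial.
-/

open Equiv Equiv.Perm Nat

theorem Nat.factorial_sq_le_factorial_mul_factorial (a d : ℕ) :
    (a + d)! ^ 2 ≤ a ! * (a + 2 * d)! := by
  have h₁ := factorial_mul_ascFactorial a d
  have h₂ := factorial_mul_ascFactorial (a + d) d
  have hasc := ascFactorial_le d (show a + 1 ≤ a + d + 1 by omega)
  rw [show a + d + d = a + 2 * d by ring] at h₂
  calc (a + d)! ^ 2 = a ! * (a + 1).ascFactorial d * (a + d)! := by rw [h₁, sq]
    _ ≤ a ! * (a + d + 1).ascFactorial d * (a + d)! := by gcongr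
    _ = a ! * (a + 2 * d)! := by rw [← h₂]; ring

theorem Nat.mul_le_sq_of_mul_eq_of_sq_le_mul {b₀ b₁ b₂ F₀ F₁ F₂ N : ℕ} (h₀ : b₀ * F₀ = N)
    (h₁ : b₁ * F₁ = N) (h₂ : b₂ * F₂ = N) (hF : F₁ ^ 2 ≤ F₀ * F₂) (hpos : 0 < F₀ * F₂) :
    b₀ * b₂ ≤ b₁ ^ 2 := by
  refine Nat.le_of_mul_le_mul_right ?_ hpos
  calc b₀ * b₂ * (F₀ * F₂) = (b₀ * F₀) * (b₂ * F₂) := by ring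
    _ = (b₁ * F₁) ^ 2 := by rw [h₀, h₂, ← h₁, sq]
    _ = b₁ ^ 2 * F₁ ^ 2 := by ring
    _ ≤ b₁ ^ 2 * (F₀ * F₂) := by gcongr

namespace Equiv.Perm

variable {α : Type*} [Fintype α] [DecidableEq α]

theorem card_support_eq_two_mul_card_cycleType {σ : Perm α} (hσ : σ ^ 2 = 1) :
    #σ.support = 2 * σ.cycleType.card := by
  rw [← sum_cycleType, cycleType_of_pow_prime_eq_one hσ, Multiset.sum_replicate,
    Multiset.card_replicate, smul_eq_mul, mul_comm]

theorem two_mul_card_le_apply_add_card_support [LinearOrder α] {σ : Perm α} (hσ : σ ^ 2 = 1) :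
    2 * #{i | i ≤ σ i} + #σ.support = 2 * Fintype.card α := by
  set A : Finset α := {i | i ≤ σ i}
  set B : Finset α := {i | σ i ≤ i}
  have hσσ (i : α) : σ (σ i) = i := by rw [← mul_apply, ← sq, hσ, one_apply]
  have hswap : #A = #B :=
    card_nbij' σ σ (fun i hi ↦ by simpa [A, B, hσσ] using hi)
      (fun i hi ↦ by simpa [A, B, hσσ] using hi) (fun i _ ↦ hσσ i) (fun i _ ↦ hσσ i)
  have hunion : A ∪ B = univ := by
    ext i; simp [A, B, le_total]
  have hinter : A ∩ B = σ.supportᶜ := by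
    ext i; simp [A, B, le_antisymm_iff, and_comm]
  have := card_union_add_card_inter A B
  rw [hunion, hinter, card_compl, Finset.card_univ] at this
  have := σ.support.card_le_univ
  omega

theorem card_le_apply_eq_card_sub_card_cycleType [LinearOrder α] {σ : Perm α}
    (hσ : σ ^ 2 = 1) : #{i | i ≤ σ i} = Fintype.card α - σ.cycleType.card := by
  have := two_mul_card_le_apply_add_card_support hσ
  rw [card_support_eq_two_mul_card_cycleType hσ] at this
  omega

variable (α) in
theorem card_cycleType_eq_replicate_two_mul (j : ℕ) :
    #{g : Perm α | g.cycleType = .replicate j 2} * ((Fintype.card α - 2 * j)! * 2 ^ j * j !) =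
      if 2 * j ≤ Fintype.card α then (Fintype.card α)! else 0 := by
  have hcount : ∏ m ∈ (Multiset.replicate j 2).toFinset,
      ((Multiset.replicate j 2).count m)! = j ! := by
    rw [Multiset.toFinset_replicate]
    split_ifs with hj
    · simp [hj]
    · simp
  have := card_of_cycleType_mul_eq α (.replicate j 2)
  simp only [Multiset.sum_replicate, Multiset.prod_replicate, hcount, smul_eq_mul] at this
  simpa [Multiset.mem_replicate, mul_comm j 2] using this

end Equiv.Perm

theorem wexcStat_eq_sub_card_cycleType {n : ℕ} {σ : Perm (Fin n)} (hσ : σ ^ 2 = 1) :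
    wexcStat σ = n - σ.cycleType.card := by
  simpa [wexcStat] using card_le_apply_eq_card_sub_card_cycleType hσ

theorem wexcCount_eq_card_cycleType {n k : ℕ} (hk : k ≤ n) :
    wexcCount n k = #{g : Perm (Fin n) | g.cycleType = .replicate (n - k) 2} := by
  unfold wexcCount Invols
  rw [filter_filter]
  congr 1
  ext σ
  simp only [mem_filter, mem_univ, true_and, ← sq]
  constructor
  · rintro ⟨hσ, rfl⟩
    have hsupp := card_support_eq_two_mul_card_cycleType hσ
    have := σ.support.card_le_univ
    rw [cycleType_of_pow_prime_eq_one hσ, wexcStat_eq_sub_card_cycleType hσ]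
    simp only [Fintype.card_fin] at this
    congr 1
    omega
  · intro h
    have hσ : σ ^ 2 = 1 :=
      pow_prime_eq_one_iff.mpr fun c hc ↦ Multiset.eq_of_mem_replicate (h ▸ hc)
    refine ⟨hσ, ?_⟩
    rw [wexcStat_eq_sub_card_cycleType hσ, h, Multiset.card_replicate]
    omega

/-- The order of the centraliser of an involution in `S_n` with `n - k` two-cycles. -/
def involutionWeight (n k : ℕ) : ℕ := (2 * k - n)! * 2 ^ (n - k) * (n - k)!

theorem wexcCount_mul_involutionWeight {n k : ℕ} (hk : k ≤ n) :
    wexcCount n k * involutionWeight n k = if n ≤ 2 * k then n ! else 0 := by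
  have := card_cycleType_eq_replicate_two_mul (Fin n) (n - k)
  rw [Fintype.card_fin, show n - 2 * (n - k) = 2 * k - n by omega] at this
  rw [wexcCount_eq_card_cycleType hk, involutionWeight, this]
  exact if_congr (by omega) rfl rfl

theorem involutionWeight_pos (n k : ℕ) : 0 < involutionWeight n k := by
  unfold involutionWeight; positivity

theorem wexcCount_eq_zero {n k : ℕ} (hk : 2 * k < n) : wexcCount n k = 0 := by
  have := wexcCount_mul_involutionWeight (show k ≤ n by omega)
  rw [if_neg (by omega), mul_eq_zero] at this
  exact this.resolve_right (involutionWeight_pos n k).ne'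

theorem involutionWeight_sq_le {n k : ℕ} (hk : n ≤ 2 * (k - 1)) (hkn : k < n) :
    involutionWeight n k ^ 2 ≤ involutionWeight n (k - 1) * involutionWeight n (k + 1) := by
  obtain ⟨a, ha⟩ : ∃ a, 2 * (k - 1) - n = a := ⟨_, rfl⟩
  obtain ⟨i, hi⟩ : ∃ i, n - (k + 1) = i := ⟨_, rfl⟩
  unfold involutionWeight
  rw [ha, hi, show 2 * k - n = a + 2 by omega, show 2 * (k + 1) - n = a + 2 * 2 by omega,
    show n - k = i + 1 by omega, show n - (k - 1) = i + 2 * 1 by omega]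
  have hfa := factorial_sq_le_factorial_mul_factorial a 2
  have hfi := factorial_sq_le_factorial_mul_factorial i 1
  calc ((a + 2)! * 2 ^ (i + 1) * (i + 1)!) ^ 2
      = (a + 2)! ^ 2 * (i + 1)! ^ 2 * (2 ^ i * 2 ^ (i + 2 * 1)) := by ring
    _ ≤ (a ! * (a + 2 * 2)!) * (i ! * (i + 2 * 1)!) * (2 ^ i * 2 ^ (i + 2 * 1)) := by gcongr
    _ = _ := by ring

theorem weak_excedance_log_concave_general (n : ℕ) (k : ℕ)
    (hk1 : k < n) :
    wexcCount n (k - 1) * wexcCount n (k + 1) ≤ wexcCount n k ^ 2 := by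
  by_cases hlow : n ≤ 2 * (k - 1)
  · have h (j : ℕ) (hj : n ≤ 2 * j) (hjn : j ≤ n) : wexcCount n j * involutionWeight n j = n ! := by
      rw [wexcCount_mul_involutionWeight hjn, if_pos hj]
    exact Nat.mul_le_sq_of_mul_eq_of_sq_le_mul (h _ hlow (by omega)) (h k (by omega) hk1.le)
      (h _ (by omega) hk1) (involutionWeight_sq_le hlow hk1)
      (Nat.mul_pos (involutionWeight_pos _ _) (involutionWeight_pos _ _))
  · rw [wexcCount_eq_zero (by omega), zero_mul]
    exact Nat.zero_le _

theorem weak_excedance_log_concave (n : ℕ) (hn : 1 ≤ n) (k : ℕ) (hk0 : 0 < k)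
    (hk1 : k < n) :
    wexcCount n (k - 1) * wexcCount n (k + 1) ≤ wexcCount n k ^ 2 :=
  weak_excedance_log_concave_general n k hk1
end
end

section
/- For every positive integer n and every 0 ≤ i ≤ n−1, the number of involutions in S_n with exactly i descents equals the number of involutions in S_n with exactly n−1−i descents; that is, the polynomial I_n^d(t) = Σ_{σ∈I_n} t^{d(σ)} is symmetric. -/
noncomputable section
open Finset

/-- The set of fixed-point-free involutions in the symmetric group on `Fin n`. -/
def FPFInvols (n : ℕ) : Finset (Equiv.Perm (Fin n)) :=
  Finset.univ.filter (fun σ => σ * σ = 1 ∧ ∀ i, σ i ≠ i)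

/-- `σ` viewed as a function on one-based positions `1,…,n` (via zero-based `Fin n`),
returning one-based values; positions outside `[0,n)` are fixed. -/
def permFun (n : ℕ) (σ : Equiv.Perm (Fin n)) (i : ℕ) : ℕ :=
  if h : i < n then (σ ⟨i, h⟩ : ℕ) else i

/-- The descent set of `σ`, as a subset of `{1,…,n-1}` (one-based positions):
`i` is a descent iff `σ_i > σ_{i+1}`. -/
def DesSet (n : ℕ) (σ : Equiv.Perm (Fin n)) : Finset ℕ :=
  (Finset.Icc 1 (n - 1)).filter (fun i => permFun n σ i < permFun n σ (i - 1))

/-- The number of descents of `σ`. -/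
def desStat (n : ℕ) (σ : Equiv.Perm (Fin n)) : ℕ := (DesSet n σ).card

/-- The major index of `σ`. -/
def majStat (n : ℕ) (σ : Equiv.Perm (Fin n)) : ℕ := ∑ i ∈ DesSet n σ, i

/-!
Cut the positions `1, …, n` into blocks of consecutive positions at the points of a set
`T ⊆ {1, …, n-1}`. An involution `σ` has `Des σ ⊆ T` iff it is increasing on every block, and
`Asc σ ⊆ T` iff it is decreasing on every block. In both cases `σ` is determined by the symmetric
matrix `M a b = #{i ∈ block a | σ i ∈ block b}`, and every symmetric `ℕ`-matrix whose row sums are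
the block sizes occurs: inside block `a` the positions sent to block `b` form a run, the runs
being ordered by `b` from the left in the increasing case and from the right in the decreasing
case, and `σ` maps the run `(a, b)` onto the run `(b, a)` increasingly, resp. decreasingly. Hence
`#{σ ∈ I_n | Des σ ⊆ T} = #{σ ∈ I_n | Asc σ ⊆ T}` for every `T`. Möbius inversion on subsets
turns this into `#{Des σ = S} = #{Asc σ = S}` for every `S`; summing over `#S = i` gives the claim,
since `#(Asc σ) = n - 1 - d(σ)`.
-/

lemma card_filter_comp_eq_of_injOn {ι : Type*} {s : Finset ι} {φ : ι → ℕ} (hφ : Set.InjOn φ s)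
    (hlt : ∀ i ∈ s, φ i < #s) (P : ℕ → Prop) [DecidablePred P] :
    #{i ∈ s | P (φ i)} = #{o ∈ range #s | P o} := by
  have himage : s.image φ = range #s :=
    eq_of_subset_of_card_le
      (fun o ho => by obtain ⟨i, hi, rfl⟩ := mem_image.1 ho; simpa using hlt i hi)
      (by simp [card_image_of_injOn hφ])
  rw [← himage, filter_image, card_image_of_injOn (hφ.mono (coe_subset.2 (filter_subset _ _)))]

lemma card_filter_eq_card_filter_lt_add {ι : Type*} [DecidableEq ι] {s : Finset ι}
    {R : ι → Prop} [DecidablePred R] {g : ι → ℕ} {b : ℕ} (hlt : ∀ j ∈ s, g j < b → R j)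
    (hgt : ∀ j ∈ s, b < g j → ¬R j) :
    #{j ∈ s | R j} = #{j ∈ s | g j < b} + #{j ∈ s | R j ∧ g j = b} := by
  rw [← card_union_of_disjoint (disjoint_filter.2 fun _ _ h₁ h₂ => h₁.ne h₂.2)]
  congr 1
  ext j
  simp only [mem_filter, mem_union]
  constructor
  · rintro ⟨hj, hR⟩
    rcases lt_trichotomy (g j) b with h | h | h
    · exact Or.inl ⟨hj, h⟩
    · exact Or.inr ⟨hj, hR, h⟩
    · exact absurd hR (hgt j hj h)
  · rintro (⟨hj, h⟩ | ⟨hj, hR, -⟩)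
    · exact ⟨hj, hlt j hj h⟩
    · exact ⟨hj, hR⟩

lemma card_filter_subset_eq_sum_powerset {ι κ : Type*} [DecidableEq κ] (s : Finset ι)
    (D : ι → Finset κ) (T : Finset κ) :
    #{x ∈ s | D x ⊆ T} = ∑ S ∈ T.powerset, #{x ∈ s | D x = S} := by
  rw [card_eq_sum_card_fiberwise (f := D) (t := T.powerset) fun x hx => by
    simpa using (mem_filter.1 hx).2]
  refine sum_congr rfl fun S hS => congrArg card ?_
  rw [filter_filter]
  exact filter_congr fun x _ => ⟨fun h => h.2, fun h => ⟨h ▸ mem_powerset.1 hS, h⟩⟩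

lemma card_filter_eq_of_card_filter_subset_eq {ι κ : Type*} [DecidableEq κ] {s : Finset ι}
    {D E : ι → Finset κ} (h : ∀ T, #{x ∈ s | D x ⊆ T} = #{x ∈ s | E x ⊆ T}) (S : Finset κ) :
    #{x ∈ s | D x = S} = #{x ∈ s | E x = S} := by
  induction S using Finset.strongInduction with
  | H S ih =>
    have hS := h S
    rw [card_filter_subset_eq_sum_powerset, card_filter_subset_eq_sum_powerset,
      ← add_sum_erase _ _ (mem_powerset_self S), ← add_sum_erase _ _ (mem_powerset_self S),
      sum_congr rfl fun S' hS' => ih S' (Finset.ssubset_iff_subset_ne.2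
        ⟨mem_powerset.1 (mem_of_mem_erase hS'), ne_of_mem_erase hS'⟩)] at hS
    exact Nat.add_right_cancel hS

lemma card_filter_comp_eq_of_card_filter_eq {ι κ : Type*} [DecidableEq κ] {s : Finset ι}
    {D E : ι → κ} (h : ∀ S, #{x ∈ s | D x = S} = #{x ∈ s | E x = S}) (P : κ → Prop)
    [DecidablePred P] : #{x ∈ s | P (D x)} = #{x ∈ s | P (E x)} := by
  set t := {S ∈ s.image D ∪ s.image E | P S}
  have hsum (F : ι → κ) (hF : ∀ x ∈ s, F x ∈ s.image D ∪ s.image E) :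
      #{x ∈ s | P (F x)} = ∑ S ∈ t, #{x ∈ s | F x = S} := by
    rw [card_eq_sum_card_fiberwise (f := F) (t := t) fun x hx => by
      obtain ⟨hx, hP⟩ := mem_filter.1 hx
      exact mem_filter.2 ⟨hF x hx, hP⟩]
    refine sum_congr rfl fun S hS => congrArg card ?_
    rw [filter_filter]
    exact filter_congr fun x _ => ⟨fun h => h.2, fun h => ⟨h ▸ (mem_filter.1 hS).2, h⟩⟩
  rw [hsum D fun x hx => mem_union_left _ (mem_image_of_mem D hx),
    hsum E fun x hx => mem_union_right _ (mem_image_of_mem E hx)]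
  exact sum_congr rfl fun S _ => h S

lemma forall_strictMonoOn_fiber_iff {α β γ : Type*} [LinearOrder α] [SuccOrder α]
    [IsSuccArchimedean α] [PartialOrder β] [Preorder γ] {c : α → β} (hc : Monotone c)
    {f : α → γ} : (∀ a, StrictMonoOn f (c ⁻¹' {a})) ↔ ∀ i j, i ⋖ j → c i = c j → f i < f j := by
  refine ⟨fun hf i j hij hcij => hf (c i) rfl hcij.symm hij.lt, fun hf a => ?_⟩
  exact strictMonoOn_of_lt_succ (Set.ordConnected_singleton.preimage_mono hc)
    fun i hi hia hsa => hf i _ (Order.covBy_succ_of_not_isMax hi) (hia.trans hsa.symm)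

lemma forall_strictAntiOn_fiber_iff {α β γ : Type*} [LinearOrder α] [SuccOrder α]
    [IsSuccArchimedean α] [PartialOrder β] [Preorder γ] {c : α → β} (hc : Monotone c)
    {f : α → γ} : (∀ a, StrictAntiOn f (c ⁻¹' {a})) ↔ ∀ i j, i ⋖ j → c i = c j → f j < f i := by
  refine ⟨fun hf i j hij hcij => hf (c i) rfl hcij.symm hij.lt, fun hf a => ?_⟩
  exact strictAntiOn_of_succ_lt (Set.ordConnected_singleton.preimage_mono hc)
    fun i hi hia hsa => hf i _ (Order.covBy_succ_of_not_isMax hi) (hia.trans hsa.symm)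

lemma Fin.covBy_iff_val_add_one_eq {n : ℕ} {i j : Fin n} : i ⋖ j ↔ (i : ℕ) + 1 = j := by
  rw [Fin.covBy_iff, Nat.covBy_iff_add_one_eq]

lemma Equiv.Perm.mul_self_eq_one_iff_involutive {α : Type*} {σ : Equiv.Perm α} :
    σ * σ = 1 ↔ Function.Involutive σ := by
  simp [Equiv.Perm.ext_iff, Function.Involutive]

lemma card_filter_mul_self_eq_one {α : Type*} [Fintype α] [DecidableEq α]
    {Q : Equiv.Perm α → Prop} [DecidablePred Q] {P : (α → α) → Prop} (hPQ : ∀ σ, Q σ ↔ P σ) :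
    #{σ : Equiv.Perm α | σ * σ = 1 ∧ Q σ} =
      Nat.card {f : α → α // Function.Involutive f ∧ P f} := by
  rw [← Nat.card_eq_finsetCard]
  refine Nat.card_congr
    { toFun σ := ⟨σ.1, by
        obtain ⟨-, h₁, h₂⟩ := mem_filter.1 σ.2
        exact ⟨Equiv.Perm.mul_self_eq_one_iff_involutive.1 h₁, (hPQ _).1 h₂⟩⟩
      invFun f := ⟨f.2.1.toPerm, mem_filter.2
        ⟨mem_univ _, Equiv.Perm.mul_self_eq_one_iff_involutive.2 f.2.1, (hPQ _).2 f.2.2⟩⟩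
      left_inv σ := Subtype.ext (Equiv.ext fun _ => rfl)
      right_inv f := rfl }

namespace BlockInvolution

section Blocks

variable {α β : Type*} [Fintype α] [DecidableEq β] (c : α → β)

def block (a : β) : Finset α := {i | c i = a}

variable {c} in
@[simp] lemma coe_block (a : β) : (block c a : Set α) = c ⁻¹' {a} := by ext; simp [block]

variable {c} in
@[simp] lemma mem_block {a : β} {i : α} : i ∈ block c a ↔ c i = a := by simp [block]

variable [LinearOrder α]

def rank (i : α) : ℕ := #{j ∈ block c (c i) | j < i}

def rankTop (i : α) : ℕ := #{j ∈ block c (c i) | i < j}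

variable {c}

lemma rank_add_rankTop (i : α) : rank c i + rankTop c i + 1 = #(block c (c i)) := by
  have hsplit : block c (c i) =
      {j ∈ block c (c i) | j < i} ∪ {j ∈ block c (c i) | i < j} ∪ {i} := by
    ext j
    simp only [mem_union, mem_filter, mem_block, mem_singleton]
    constructor
    · intro hj; rcases lt_trichotomy j i with h | rfl | h <;> simp_all
    · rintro ((⟨hj, -⟩ | ⟨hj, -⟩) | rfl) <;> simp_all
  rw [rank, rankTop]
  conv_rhs => rw [hsplit]
  rw [card_union_of_disjoint, card_union_of_disjoint, card_singleton]
  · exact disjoint_filter.2 fun j _ h₁ h₂ => lt_asymm h₁ h₂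
  · simp only [disjoint_singleton_right, mem_union, mem_filter, lt_irrefl, and_false, or_self,
      not_false_eq_true]

lemma rank_lt_card_block (i : α) : rank c i < #(block c (c i)) := by
  have := rank_add_rankTop (c := c) i
  omega

lemma rankTop_lt_card_block (i : α) : rankTop c i < #(block c (c i)) := by
  have := rank_add_rankTop (c := c) i
  omega

lemma strictMonoOn_rank (a : β) : StrictMonoOn (rank c) (c ⁻¹' {a}) := by
  intro i hi j hj hij
  have hc : c i = c j := hi.trans hj.symm
  refine card_lt_card ⟨fun k hk => ?_, fun hsub => ?_⟩
  · simp only [mem_filter, mem_block] at hk ⊢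
    exact ⟨hk.1.trans hc, hk.2.trans hij⟩
  · simpa using hsub (show i ∈ {k ∈ block c (c j) | k < j} by simp [hc, hij])

lemma strictAntiOn_rankTop (a : β) : StrictAntiOn (rankTop c) (c ⁻¹' {a}) := by
  intro i hi j hj hij
  have hrank := strictMonoOn_rank a hi hj hij
  have hi' := rank_add_rankTop (c := c) i
  have hj' := rank_add_rankTop (c := c) j
  rw [show c i = c j from hi.trans hj.symm] at hi'
  omega

lemma card_filter_rank (a : β) (P : ℕ → Prop) [DecidablePred P] :
    #{i ∈ block c a | P (rank c i)} = #{o ∈ range #(block c a) | P o} :=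
  card_filter_comp_eq_of_injOn ((coe_block (c := c) a).symm ▸ (strictMonoOn_rank a).injOn)
    (fun i hi => mem_block.1 hi ▸ rank_lt_card_block i) P

lemma card_filter_rankTop (a : β) (P : ℕ → Prop) [DecidablePred P] :
    #{i ∈ block c a | P (rankTop c i)} = #{o ∈ range #(block c a) | P o} :=
  card_filter_comp_eq_of_injOn ((coe_block (c := c) a).symm ▸ (strictAntiOn_rankTop a).injOn)
    (fun i hi => mem_block.1 hi ▸ rankTop_lt_card_block i) P

lemma exists_rank_eq {a : β} {t : ℕ} (ht : t < #(block c a)) : ∃ i, c i = a ∧ rank c i = t := by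
  have := card_filter_rank (c := c) a (· = t)
  rw [filter_eq' (range _), if_pos (mem_range.2 ht), card_singleton] at this
  obtain ⟨i, hi⟩ := card_pos.1 (this ▸ Nat.one_pos)
  simp only [mem_filter, mem_block] at hi
  exact ⟨i, hi⟩

variable (c) in
/-- The element of rank `t` in block `a`; the junk value `d` when that block is too small. -/
def atRank (a : β) (t : ℕ) (d : α) : α :=
  if h : ∃ i, c i = a ∧ rank c i = t then h.choose else d

lemma atRank_spec {a : β} {t : ℕ} (ht : t < #(block c a)) (d : α) :
    c (atRank c a t d) = a ∧ rank c (atRank c a t d) = t := by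
  have h := exists_rank_eq ht
  rw [atRank, dif_pos h]
  exact h.choose_spec

variable (c) in
def atRankTop (a : β) (t : ℕ) (d : α) : α := atRank c a (#(block c a) - 1 - t) d

lemma atRankTop_spec {a : β} {t : ℕ} (ht : t < #(block c a)) (d : α) :
    c (atRankTop c a t d) = a ∧ rankTop c (atRankTop c a t d) = t := by
  obtain ⟨h₁, h₂⟩ := atRank_spec (c := c) (show #(block c a) - 1 - t < #(block c a) by omega) d
  have := rank_add_rankTop (c := c) (atRankTop c a t d)
  rw [atRankTop, h₁] at *
  exact ⟨h₁, by omega⟩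

end Blocks

section Matrices

variable {α : Type*} [Fintype α] {c : α → ℕ}

def rowPrefix (M : ℕ → ℕ → ℕ) (a b : ℕ) : ℕ := ∑ x ∈ range b, M a x

lemma rowPrefix_succ (M : ℕ → ℕ → ℕ) (a b : ℕ) :
    rowPrefix M a (b + 1) = rowPrefix M a b + M a b :=
  sum_range_succ _ _

lemma rowPrefix_mono (M : ℕ → ℕ → ℕ) (a : ℕ) : Monotone (rowPrefix M a) :=
  fun _ _ h => sum_le_sum_of_subset (range_mono h)

variable (c) in
structure IsSymmBlockMatrix (K : ℕ) (M : ℕ → ℕ → ℕ) : Prop where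
  symm : ∀ a b, M a b = M b a
  rowPrefix_eq : ∀ a, rowPrefix M a K = #(block c a)
  eq_zero : ∀ a b, K ≤ b → M a b = 0

/-- Row `a` of `M` cuts the offsets `0, 1, …` of block `a` into consecutive chunks, the `b`-th of
length `M a b`; this is the index of the chunk containing offset `o`. -/
def rowChunk (K : ℕ) (M : ℕ → ℕ → ℕ) (a o : ℕ) : ℕ :=
  Nat.findGreatest (fun b => rowPrefix M a b ≤ o) K

lemma rowChunk_mono (K : ℕ) (M : ℕ → ℕ → ℕ) (a : ℕ) : Monotone (rowChunk K M a) :=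
  fun _ _ h => Nat.findGreatest_mono_left (fun _ hb => hb.trans h) K

namespace IsSymmBlockMatrix

variable {K : ℕ} {M : ℕ → ℕ → ℕ} (V : IsSymmBlockMatrix c K M)
include V

lemma rowPrefix_of_le {a b : ℕ} (hb : K ≤ b) : rowPrefix M a b = #(block c a) := by
  rw [← V.rowPrefix_eq, rowPrefix, rowPrefix]
  exact (sum_subset (range_mono hb) fun x hx hxK =>
    V.eq_zero a x (by simpa using hxK)).symm

lemma rowPrefix_le (a b : ℕ) : rowPrefix M a b ≤ #(block c a) := by
  rcases le_total b K with hb | hb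
  · exact V.rowPrefix_eq a ▸ rowPrefix_mono M a hb
  · exact (V.rowPrefix_of_le hb).le

lemma rowPrefix_add_lt {a b k : ℕ} (hk : k < M a b) : rowPrefix M b a + k < #(block c b) := by
  have := V.rowPrefix_le b (a + 1)
  rw [rowPrefix_succ, ← V.symm] at this
  omega

lemma rowChunk_eq_iff {a o b : ℕ} (ho : o < #(block c a)) :
    rowChunk K M a o = b ↔ rowPrefix M a b ≤ o ∧ o < rowPrefix M a (b + 1) := by
  have hKo : ∀ b', K ≤ b' → o < rowPrefix M a b' := fun b' h => V.rowPrefix_of_le h ▸ ho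
  constructor
  · rintro rfl
    refine ⟨Nat.findGreatest_spec (P := fun b => rowPrefix M a b ≤ o) (Nat.zero_le K)
      (by simp [rowPrefix]), ?_⟩
    by_cases hK : rowChunk K M a o + 1 ≤ K
    · exact not_le.1 (Nat.findGreatest_is_greatest (P := fun b => rowPrefix M a b ≤ o)
        (Nat.lt_succ_self _) hK)
    · exact hKo _ (by omega)
  · rintro ⟨h₁, h₂⟩
    have hbK : b < K := lt_of_not_ge fun h => (hKo b h).not_ge h₁
    refine Nat.findGreatest_eq_iff.2 ⟨hbK.le, fun _ => h₁, fun b' hb' _ => ?_⟩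
    exact not_le.2 (h₂.trans_le (rowPrefix_mono M a hb'))

lemma rowChunk_rowPrefix_add {a b k : ℕ} (hk : k < M a b) :
    rowChunk K M a (rowPrefix M a b + k) = b := by
  have := V.rowPrefix_le a (b + 1)
  rw [rowPrefix_succ] at this
  rw [V.rowChunk_eq_iff (by omega), rowPrefix_succ]
  omega

lemma lt_of_rowChunk_eq {a o b : ℕ} (ho : o < #(block c a)) (hb : rowChunk K M a o = b) :
    rowPrefix M a b ≤ o ∧ o - rowPrefix M a b < M a b := by
  have := (V.rowChunk_eq_iff ho).1 hb
  rw [rowPrefix_succ] at this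
  omega

lemma card_filter_rowChunk_eq (a b : ℕ) :
    #{o ∈ range #(block c a) | rowChunk K M a o = b} = M a b := by
  have := V.rowPrefix_le a (b + 1)
  rw [rowPrefix_succ] at this
  have hIco : {o ∈ range #(block c a) | rowChunk K M a o = b} =
      Ico (rowPrefix M a b) (rowPrefix M a b + M a b) := by
    ext o
    simp only [mem_filter, mem_range, mem_Ico]
    constructor
    · rintro ⟨ho, h⟩
      have := (V.rowChunk_eq_iff ho).1 h
      rwa [rowPrefix_succ] at this
    · rintro h
      have ho : o < #(block c a) := by omega
      exact ⟨ho, (V.rowChunk_eq_iff ho).2 (by rwa [rowPrefix_succ])⟩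
  rw [hIco, Nat.card_Ico]
  omega

end IsSymmBlockMatrix

variable (c) in
def blockMatrix (f : α → α) (a b : ℕ) : ℕ := #{i ∈ block c a | c (f i) = b}

lemma rowPrefix_blockMatrix (f : α → α) (a b : ℕ) :
    rowPrefix (blockMatrix c f) a b = #{i ∈ block c a | c (f i) < b} := by
  rw [card_eq_sum_card_fiberwise (f := fun i => c (f i)) (t := range b)
    (fun i hi => by simpa using (mem_filter.1 hi).2)]
  refine sum_congr rfl fun x hx => ?_
  rw [blockMatrix, filter_filter]
  congr 1
  refine filter_congr fun i _ => ?_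
  have := mem_range.1 hx
  constructor
  · intro h; exact ⟨h ▸ this, h⟩
  · exact fun h => h.2

lemma isSymmBlockMatrix_blockMatrix {K : ℕ} (hK : ∀ i, c i < K) {f : α → α}
    (hf : Function.Involutive f) : IsSymmBlockMatrix c K (blockMatrix c f) where
  symm a b := card_nbij' f f (fun i hi => by simp_all [hf i]) (fun i hi => by simp_all [hf i])
    (fun i _ => hf i) (fun i _ => hf i)
  rowPrefix_eq a := by
    rw [rowPrefix_blockMatrix]
    exact congrArg card (filter_true_of_mem fun i _ => hK (f i))
  eq_zero a b hb := card_eq_zero.2 <| filter_eq_empty_iff.2 fun i _ h =>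
    (hK (f i)).not_ge (h ▸ hb)

end Matrices

section Chunks

variable {α : Type*} {c : α → ℕ} {f : α → α}

variable (c f) in
/-- Its fibres are the chunks: the elements of block `a` that `f` sends to block `b`. -/
def chunkColor (i : α) : ℕ × ℕ := (c i, c (f i))

lemma chunkColor_eq_iff {i j : α} :
    chunkColor c f j = chunkColor c f i ↔ c j = c i ∧ c (f j) = c (f i) := Prod.ext_iff

variable [Fintype α]

lemma card_block_chunkColor (a b : ℕ) :
    #(block (chunkColor c f) (a, b)) = blockMatrix c f a b := by
  simp only [blockMatrix, block, filter_filter, chunkColor, Prod.mk.injEq]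

variable [LinearOrder α]

lemma rank_chunkColor (i : α) :
    rank (chunkColor c f) i = #{j ∈ block c (c i) | j < i ∧ c (f j) = c (f i)} := by
  simp only [rank, filter_filter, block, chunkColor_eq_iff]
  congr 1; ext j; simp only [mem_filter, mem_univ, true_and]; tauto

lemma rankTop_chunkColor (i : α) :
    rankTop (chunkColor c f) i = #{j ∈ block c (c i) | i < j ∧ c (f j) = c (f i)} := by
  simp only [rankTop, filter_filter, block, chunkColor_eq_iff]
  congr 1; ext j; simp only [mem_filter, mem_univ, true_and]; tauto

lemma rank_chunkColor_add_rankTop (i : α) :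
    rank (chunkColor c f) i + rankTop (chunkColor c f) i + 1 = blockMatrix c f (c i) (c (f i)) :=
  card_block_chunkColor (c := c) (f := f) _ _ ▸ rank_add_rankTop i

/-- Below `i` in its block lie exactly the elements sent to lower blocks than `f i`, and those of
the chunk of `i` below `i`. -/
lemma rank_eq_rowPrefix_add_rank_chunkColor (hc : Monotone c)
    (hf : ∀ a, StrictMonoOn f (c ⁻¹' {a})) (i : α) :
    rank c i = rowPrefix (blockMatrix c f) (c i) (c (f i)) + rank (chunkColor c f) i := by
  rw [rowPrefix_blockMatrix, rank_chunkColor, rank]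
  refine card_filter_eq_card_filter_lt_add (fun j hj hlt => ?_) (fun j hj hgt hji => ?_)
  · refine lt_of_not_ge fun hij => ?_
    rcases hij.eq_or_lt with rfl | hij
    · exact lt_irrefl _ hlt
    · exact (hc.reflect_lt hlt).not_gt (hf _ rfl (mem_block.1 hj) hij)
  · exact (hc.reflect_lt hgt).not_gt (hf _ (mem_block.1 hj) rfl hji)

lemma rankTop_eq_rowPrefix_add_rankTop_chunkColor (hc : Monotone c)
    (hf : ∀ a, StrictAntiOn f (c ⁻¹' {a})) (i : α) :
    rankTop c i = rowPrefix (blockMatrix c f) (c i) (c (f i)) + rankTop (chunkColor c f) i := by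
  rw [rowPrefix_blockMatrix, rankTop_chunkColor, rankTop]
  refine card_filter_eq_card_filter_lt_add (fun j hj hlt => ?_) (fun j hj hgt hij => ?_)
  · refine lt_of_not_ge fun hji => ?_
    rcases hji.eq_or_lt with rfl | hji
    · exact lt_irrefl _ hlt
    · exact (hc.reflect_lt hlt).not_gt (hf _ (mem_block.1 hj) rfl hji)
  · exact (hc.reflect_lt hgt).not_gt (hf _ rfl (mem_block.1 hj) hij)

lemma rank_chunkColor_apply_of_strictMonoOn (hinv : Function.Involutive f)
    (hf : ∀ a, StrictMonoOn f (c ⁻¹' {a})) (i : α) :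
    rank (chunkColor c f) (f i) = rank (chunkColor c f) i := by
  rw [rank_chunkColor, rank_chunkColor, hinv i]
  refine card_nbij' f f (fun j hj => ?_) (fun j hj => ?_) (fun j _ => hinv j) (fun j _ => hinv j)
  · simp only [coe_filter, mem_block, Set.mem_ofPred_eq] at hj ⊢
    refine ⟨hj.2.2, ?_, by rw [hinv, hj.1]⟩
    simpa [hinv i] using hf _ hj.1 rfl hj.2.1
  · simp only [coe_filter, mem_block, Set.mem_ofPred_eq] at hj ⊢
    refine ⟨hj.2.2, ?_, by rw [hinv, hj.1]⟩
    simpa [hinv i] using hf _ hj.1 rfl hj.2.1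

lemma rank_chunkColor_apply_of_strictAntiOn (hinv : Function.Involutive f)
    (hf : ∀ a, StrictAntiOn f (c ⁻¹' {a})) (i : α) :
    rank (chunkColor c f) (f i) = rankTop (chunkColor c f) i := by
  rw [rank_chunkColor, rankTop_chunkColor, hinv i]
  refine card_nbij' f f (fun j hj => ?_) (fun j hj => ?_) (fun j _ => hinv j) (fun j _ => hinv j)
  · simp only [coe_filter, mem_block, Set.mem_ofPred_eq] at hj ⊢
    refine ⟨hj.2.2, ?_, by rw [hinv, hj.1]⟩
    simpa [hinv i] using hf _ hj.1 rfl hj.2.1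
  · simp only [coe_filter, mem_block, Set.mem_ofPred_eq] at hj ⊢
    refine ⟨hj.2.2, ?_, by rw [hinv, hj.1]⟩
    simpa [hinv i] using hf _ rfl hj.1 hj.2.1

end Chunks

section Decoding

variable {α : Type*} [Fintype α] [LinearOrder α] {c : α → ℕ} {K : ℕ} {M : ℕ → ℕ → ℕ}

variable (c) in
/-- Maps the chunk `(a, b)` of block `a` increasingly onto the chunk `(b, a)` of block `b`. -/
def incDecode (K : ℕ) (M : ℕ → ℕ → ℕ) (i : α) : α :=
  let b := rowChunk K M (c i) (rank c i)
  atRank c b (rowPrefix M b (c i) + (rank c i - rowPrefix M (c i) b)) i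

variable (c) in
/-- As `incDecode`, but with offsets counted from the top of each block and each chunk mapped
decreasingly. -/
def decDecode (K : ℕ) (M : ℕ → ℕ → ℕ) (i : α) : α :=
  let b := rowChunk K M (c i) (rankTop c i)
  atRankTop c b (rowPrefix M b (c i) + (M (c i) b - 1 - (rankTop c i - rowPrefix M (c i) b))) i

namespace IsSymmBlockMatrix

variable (V : IsSymmBlockMatrix c K M)
include V

lemma incDecode_spec {i : α} {b : ℕ} (hb : rowChunk K M (c i) (rank c i) = b) :
    c (incDecode c K M i) = b ∧
      rank c (incDecode c K M i) = rowPrefix M b (c i) + (rank c i - rowPrefix M (c i) b) := by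
  obtain ⟨-, hk⟩ := V.lt_of_rowChunk_eq (rank_lt_card_block i) hb
  subst hb
  exact atRank_spec (V.rowPrefix_add_lt hk) i

lemma decDecode_spec {i : α} {b : ℕ} (hb : rowChunk K M (c i) (rankTop c i) = b) :
    c (decDecode c K M i) = b ∧ rankTop c (decDecode c K M i) =
      rowPrefix M b (c i) + (M (c i) b - 1 - (rankTop c i - rowPrefix M (c i) b)) := by
  obtain ⟨-, hk⟩ := V.lt_of_rowChunk_eq (rankTop_lt_card_block i) hb
  subst hb
  exact atRankTop_spec (V.rowPrefix_add_lt (by omega)) i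

lemma incDecode_involutive : Function.Involutive (incDecode c K M) := by
  intro i
  obtain ⟨hc, hr⟩ := V.incDecode_spec rfl (i := i)
  obtain ⟨hle, hk⟩ := V.lt_of_rowChunk_eq (rank_lt_card_block i) rfl
  have hb : rowChunk K M (c (incDecode c K M i)) (rank c (incDecode c K M i)) = c i := by
    rw [hc, hr]
    exact V.rowChunk_rowPrefix_add (V.symm _ _ ▸ hk)
  obtain ⟨hc', hr'⟩ := V.incDecode_spec hb
  refine (strictMonoOn_rank (c i)).injOn hc' rfl ?_
  rw [hr', hc, hr]
  omega

lemma decDecode_involutive : Function.Involutive (decDecode c K M) := by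
  intro i
  obtain ⟨hc, hr⟩ := V.decDecode_spec rfl (i := i)
  obtain ⟨hle, hk⟩ := V.lt_of_rowChunk_eq (rankTop_lt_card_block i) rfl
  have hsymm := V.symm (c i) (rowChunk K M (c i) (rankTop c i))
  have hb : rowChunk K M (c (decDecode c K M i)) (rankTop c (decDecode c K M i)) = c i := by
    rw [hc, hr]
    exact V.rowChunk_rowPrefix_add (by omega)
  obtain ⟨hc', hr'⟩ := V.decDecode_spec hb
  refine (strictAntiOn_rankTop (c i)).injOn hc' rfl ?_
  rw [hr', hc, hr]
  omega

lemma incDecode_strictMonoOn (hc : Monotone c) (a : ℕ) :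
    StrictMonoOn (incDecode c K M) (c ⁻¹' {a}) := by
  intro i hi j hj hij
  have hcij : c i = c j := hi.trans hj.symm
  have hrank : rank c i < rank c j := strictMonoOn_rank (c i) rfl hcij.symm hij
  have hchunk := rowChunk_mono K M (c i) hrank.le
  obtain ⟨hci, hri⟩ := V.incDecode_spec rfl (i := i)
  obtain ⟨hcj, hrj⟩ := V.incDecode_spec rfl (i := j)
  obtain ⟨hle, -⟩ := V.lt_of_rowChunk_eq (rank_lt_card_block i) rfl
  rw [← hcij] at hcj hrj
  rcases hchunk.lt_or_eq with hlt | heq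
  · exact hc.reflect_lt (by rwa [hci, hcj])
  · have hsame : c (incDecode c K M j) = c (incDecode c K M i) := by rw [hci, hcj, heq]
    rw [← (strictMonoOn_rank _).lt_iff_lt rfl hsame, hri, hrj, ← heq]
    omega

lemma decDecode_strictAntiOn (hc : Monotone c) (a : ℕ) :
    StrictAntiOn (decDecode c K M) (c ⁻¹' {a}) := by
  intro i hi j hj hij
  have hcij : c i = c j := hi.trans hj.symm
  have hrTop : rankTop c j < rankTop c i := strictAntiOn_rankTop (c i) rfl hcij.symm hij
  have hchunk := rowChunk_mono K M (c i) hrTop.le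
  obtain ⟨hci, hri⟩ := V.decDecode_spec rfl (i := i)
  obtain ⟨hcj, hrj⟩ := V.decDecode_spec rfl (i := j)
  obtain ⟨-, hk⟩ := V.lt_of_rowChunk_eq (rankTop_lt_card_block i) rfl
  obtain ⟨hle, -⟩ := V.lt_of_rowChunk_eq (rankTop_lt_card_block j) rfl
  rw [← hcij] at hcj hrj hle
  rcases hchunk.lt_or_eq with hlt | heq
  · exact hc.reflect_lt (by rwa [hci, hcj])
  · have hsame : c (decDecode c K M j) = c (decDecode c K M i) := by rw [hci, hcj, heq]
    rw [← (strictAntiOn_rankTop _).lt_iff_gt rfl hsame, hri, hrj, heq]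
    rw [heq] at hle
    omega

lemma blockMatrix_incDecode : blockMatrix c (incDecode c K M) = M := by
  funext a b
  calc #{i ∈ block c a | c (incDecode c K M i) = b}
      = #{i ∈ block c a | rowChunk K M a (rank c i) = b} :=
        congrArg card <| filter_congr fun i hi => by
          rw [(V.incDecode_spec rfl).1, mem_block.1 hi]
    _ = M a b := (card_filter_rank a _).trans (V.card_filter_rowChunk_eq a b)

lemma blockMatrix_decDecode : blockMatrix c (decDecode c K M) = M := by
  funext a b
  calc #{i ∈ block c a | c (decDecode c K M i) = b}
      = #{i ∈ block c a | rowChunk K M a (rankTop c i) = b} :=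
        congrArg card <| filter_congr fun i hi => by
          rw [(V.decDecode_spec rfl).1, mem_block.1 hi]
    _ = M a b := (card_filter_rankTop a _).trans (V.card_filter_rowChunk_eq a b)

end IsSymmBlockMatrix

lemma incDecode_blockMatrix (hc : Monotone c) (hK : ∀ i, c i < K) {f : α → α}
    (hinv : Function.Involutive f) (hf : ∀ a, StrictMonoOn f (c ⁻¹' {a})) :
    incDecode c K (blockMatrix c f) = f := by
  have V := isSymmBlockMatrix_blockMatrix hK hinv
  funext i
  have hi := rank_eq_rowPrefix_add_rank_chunkColor hc hf i
  have hfi := rank_eq_rowPrefix_add_rank_chunkColor hc hf (f i)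
  rw [hinv i, rank_chunkColor_apply_of_strictMonoOn hinv hf] at hfi
  have hk := rank_chunkColor_add_rankTop (c := c) (f := f) i
  have hb : rowChunk K (blockMatrix c f) (c i) (rank c i) = c (f i) := by
    rw [hi]
    exact V.rowChunk_rowPrefix_add (by omega)
  obtain ⟨hc', hr'⟩ := V.incDecode_spec hb
  exact (strictMonoOn_rank (c (f i))).injOn hc' rfl (by omega)

lemma decDecode_blockMatrix (hc : Monotone c) (hK : ∀ i, c i < K) {f : α → α}
    (hinv : Function.Involutive f) (hf : ∀ a, StrictAntiOn f (c ⁻¹' {a})) :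
    decDecode c K (blockMatrix c f) = f := by
  have V := isSymmBlockMatrix_blockMatrix hK hinv
  funext i
  have hi := rankTop_eq_rowPrefix_add_rankTop_chunkColor hc hf i
  have hfi := rankTop_eq_rowPrefix_add_rankTop_chunkColor hc hf (f i)
  have hk := rank_chunkColor_add_rankTop (c := c) (f := f) i
  have hk' := rank_chunkColor_add_rankTop (c := c) (f := f) (f i)
  rw [hinv i, rank_chunkColor_apply_of_strictAntiOn hinv hf, V.symm] at hk'
  rw [hinv i] at hfi
  have hb : rowChunk K (blockMatrix c f) (c i) (rankTop c i) = c (f i) := by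
    rw [hi]
    exact V.rowChunk_rowPrefix_add (by omega)
  obtain ⟨hc', hr'⟩ := V.decDecode_spec hb
  exact (strictAntiOn_rankTop (c (f i))).injOn hc' rfl (by omega)

end Decoding

theorem card_involutive_strictMonoOn_eq_card_involutive_strictAntiOn {α : Type*} [Fintype α]
    [LinearOrder α] {c : α → ℕ} (hc : Monotone c) :
    Nat.card {f : α → α // Function.Involutive f ∧ ∀ a, StrictMonoOn f (c ⁻¹' {a})} =
      Nat.card {f : α → α // Function.Involutive f ∧ ∀ a, StrictAntiOn f (c ⁻¹' {a})} := by
  obtain ⟨K, hK⟩ : ∃ K, ∀ i, c i < K :=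
    ⟨univ.sup c + 1, fun i => Nat.lt_succ_of_le (le_sup (mem_univ i))⟩
  have V {f : α → α} (hf : Function.Involutive f) := isSymmBlockMatrix_blockMatrix hK hf
  exact Nat.card_congr
    { toFun f := ⟨decDecode c K (blockMatrix c f.1),
        (V f.2.1).decDecode_involutive, (V f.2.1).decDecode_strictAntiOn hc⟩
      invFun f := ⟨incDecode c K (blockMatrix c f.1),
        (V f.2.1).incDecode_involutive, (V f.2.1).incDecode_strictMonoOn hc⟩
      left_inv f := Subtype.ext <| by
        simp only [(V f.2.1).blockMatrix_decDecode, incDecode_blockMatrix hc hK f.2.1 f.2.2]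
      right_inv f := Subtype.ext <| by
        simp only [(V f.2.1).blockMatrix_incDecode, decDecode_blockMatrix hc hK f.2.1 f.2.2] }

end BlockInvolution

section Descents

lemma desSet_subset_Icc (n : ℕ) (σ : Equiv.Perm (Fin n)) : DesSet n σ ⊆ Icc 1 (n - 1) :=
  filter_subset _ _

lemma desStat_le (n : ℕ) (σ : Equiv.Perm (Fin n)) : desStat n σ ≤ n - 1 :=
  (card_le_card (desSet_subset_Icc n σ)).trans (by simp)

def AscSet (n : ℕ) (σ : Equiv.Perm (Fin n)) : Finset ℕ := Icc 1 (n - 1) \ DesSet n σ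

lemma card_ascSet (n : ℕ) (σ : Equiv.Perm (Fin n)) : #(AscSet n σ) = n - 1 - desStat n σ := by
  rw [AscSet, card_sdiff_of_subset (desSet_subset_Icc n σ), Nat.card_Icc, Nat.add_sub_cancel,
    desStat]

variable {n : ℕ}

/-- With `i` zero-based, the one-based positions `t` and `t + 1` lie in different blocks exactly
when `t ∈ T`. -/
def blockColoring (T : Finset ℕ) (i : Fin n) : ℕ := #{t ∈ T | t ≤ (i : ℕ)}

lemma blockColoring_mono (T : Finset ℕ) : Monotone (blockColoring (n := n) T) :=
  fun _ _ hij => card_le_card fun _ ht => by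
    simp only [mem_filter] at ht ⊢
    exact ⟨ht.1, ht.2.trans hij⟩

lemma blockColoring_eq_iff {T : Finset ℕ} {i j : Fin n} (hij : i ⋖ j) :
    blockColoring T i = blockColoring T j ↔ (j : ℕ) ∉ T := by
  have hj := Fin.covBy_iff_val_add_one_eq.1 hij
  have hsplit : {t ∈ T | t ≤ (j : ℕ)} = {t ∈ T | t ≤ (i : ℕ)} ∪ {t ∈ T | t = j} := by
    rw [← filter_or]
    exact filter_congr fun t _ => by omega
  rw [blockColoring, blockColoring, hsplit, card_union_of_disjoint
    (disjoint_filter.2 fun t _ h₁ h₂ => by omega), filter_eq' T]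
  split_ifs <;> simp_all

lemma val_mem_Icc_of_covBy {i j : Fin n} (hij : i ⋖ j) : (j : ℕ) ∈ Icc 1 (n - 1) := by
  have := Fin.covBy_iff_val_add_one_eq.1 hij
  exact mem_Icc.2 ⟨by omega, by omega⟩

lemma mem_desSet_iff {σ : Equiv.Perm (Fin n)} {i j : Fin n} (hij : i ⋖ j) :
    (j : ℕ) ∈ DesSet n σ ↔ σ j < σ i := by
  have hj := Fin.covBy_iff_val_add_one_eq.1 hij
  obtain ⟨i, hi⟩ := i
  obtain ⟨j, hj'⟩ := j
  simp only at hj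
  subst hj
  rw [DesSet, mem_filter, permFun, permFun, dif_pos hj', Nat.add_sub_cancel, dif_pos hi]
  exact and_iff_right (val_mem_Icc_of_covBy hij)

lemma exists_covBy_of_mem_Icc {d : ℕ} (hd : d ∈ Icc 1 (n - 1)) :
    ∃ i j : Fin n, i ⋖ j ∧ (j : ℕ) = d := by
  obtain ⟨h₁, h₂⟩ := mem_Icc.1 hd
  exact ⟨⟨d - 1, by omega⟩, ⟨d, by omega⟩, Fin.covBy_iff_val_add_one_eq.2 (by simp; omega), rfl⟩

lemma desSet_subset_iff (T : Finset ℕ) (σ : Equiv.Perm (Fin n)) :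
    DesSet n σ ⊆ T ↔ ∀ a, StrictMonoOn σ (blockColoring T ⁻¹' {a}) := by
  rw [forall_strictMonoOn_fiber_iff (blockColoring_mono T)]
  refine ⟨fun h i j hij hc => lt_of_not_ge fun hle => (blockColoring_eq_iff hij).1 hc ?_,
    fun h d hd => ?_⟩
  · exact h ((mem_desSet_iff hij).2 (hle.lt_of_ne (σ.injective.ne hij.lt.ne')))
  · obtain ⟨i, j, hij, rfl⟩ := exists_covBy_of_mem_Icc (desSet_subset_Icc n σ hd)
    by_contra hT
    exact lt_asymm ((mem_desSet_iff hij).1 hd) (h i j hij ((blockColoring_eq_iff hij).2 hT))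

lemma ascSet_subset_iff (T : Finset ℕ) (σ : Equiv.Perm (Fin n)) :
    AscSet n σ ⊆ T ↔ ∀ a, StrictAntiOn σ (blockColoring T ⁻¹' {a}) := by
  rw [forall_strictAntiOn_fiber_iff (blockColoring_mono T)]
  refine ⟨fun h i j hij hc => ?_, fun h d hd => ?_⟩
  · refine (mem_desSet_iff hij).1 (by_contra fun hdes => (blockColoring_eq_iff hij).1 hc ?_)
    exact h (mem_sdiff.2 ⟨val_mem_Icc_of_covBy hij, hdes⟩)
  · obtain ⟨hd, hdes⟩ := mem_sdiff.1 hd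
    obtain ⟨i, j, hij, rfl⟩ := exists_covBy_of_mem_Icc hd
    by_contra hT
    exact hdes ((mem_desSet_iff hij).2 (h i j hij ((blockColoring_eq_iff hij).2 hT)))

end Descents

theorem card_desSet_subset_eq_card_ascSet_subset (n : ℕ) (T : Finset ℕ) :
    #{σ ∈ Invols n | DesSet n σ ⊆ T} = #{σ ∈ Invols n | AscSet n σ ⊆ T} := by
  rw [Invols, filter_filter, filter_filter,
    card_filter_mul_self_eq_one (P := fun f => ∀ a, StrictMonoOn f (blockColoring T ⁻¹' {a}))
      (desSet_subset_iff T),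
    card_filter_mul_self_eq_one (P := fun f => ∀ a, StrictAntiOn f (blockColoring T ⁻¹' {a}))
      (ascSet_subset_iff T)]
  exact BlockInvolution.card_involutive_strictMonoOn_eq_card_involutive_strictAntiOn
    (blockColoring_mono T)

theorem involution_descent_polynomial_symmetric_general (n : ℕ) (i : ℕ)
    (hi : i ≤ n - 1) :
    ((Invols n).filter (fun σ => desStat n σ = i)).card =
      ((Invols n).filter (fun σ => desStat n σ = n - 1 - i)).card := by
  have hfiber := card_filter_eq_of_card_filter_subset_eq
    (card_desSet_subset_eq_card_ascSet_subset n)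
  calc #{σ ∈ Invols n | desStat n σ = i}
      = #{σ ∈ Invols n | #(AscSet n σ) = i} :=
        card_filter_comp_eq_of_card_filter_eq hfiber (fun S => #S = i)
    _ = #{σ ∈ Invols n | desStat n σ = n - 1 - i} :=
        congrArg card <| filter_congr fun σ _ => by
          have := desStat_le n σ
          rw [card_ascSet]
          omega

theorem involution_descent_polynomial_symmetric (n : ℕ) (hn : 1 ≤ n) (i : ℕ)
    (hi : i ≤ n - 1) :
    ((Invols n).filter (fun σ => desStat n σ = i)).card =
      ((Invols n).filter (fun σ => desStat n σ = n - 1 - i)).card :=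
  involution_descent_polynomial_symmetric_general n i hi
end
end

section
/- For every positive integer n and every 0 ≤ j ≤ C(n,2), the number of involutions in S_n with major index j equals the number of involutions in S_n with major index C(n,2) − j; that is, the polynomial I_n^maj(t) = Σ_{σ∈I_n} t^{maj(σ)} is symmetric. -/
noncomputable section
open Finset

/-!
Write `R = {1, …, n - 1}` and `β T` for the number of involutions with descent set `T ⊆ R`.
Since `maj (R \ T) = C(n,2) - maj T`, it suffices to show `β T = β (R \ T)`.

Cut the positions into blocks just before each element of some `S ⊆ R`. Then `Des σ ⊆ S` says
that `σ` increases on every block, and `R \ S ⊆ Des σ` that it decreases on every block.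
An involution of either kind is determined by the map `x ↦ (block of σ x)`, i.e. by the
symmetric matrix counting how many elements of block `i` go to block `j`, and for either kind
every symmetric matrix of natural numbers whose row sums are the block sizes occurs.
Hence `∑_{T ⊆ S} β T = ∑_{T ⊆ S} β (R \ T)` for every `S ⊆ R`, and Möbius inversion on the
subsets of `R` gives `β S = β (R \ S)`.
-/

open Function

namespace InvolutionBlocks

theorem nonempty_orderIso_of_natCard_eq {X Y : Type*} [LinearOrder X] [LinearOrder Y] [Finite X]
    [Finite Y] (h : Nat.card X = Nat.card Y) : Nonempty (X ≃o Y) := by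
  have := Fintype.ofFinite X
  have := Fintype.ofFinite Y
  rw [Nat.card_eq_fintype_card, Nat.card_eq_fintype_card] at h
  exact ⟨(monoEquivOfFin X h).symm.trans (monoEquivOfFin Y rfl)⟩

section Cells

variable {α ι : Type*} (p : α → ι)

/- For `F = p ∘ σ`, `Nat.card (Cell p F i j)` is the number of elements of the fibre over `i`
that `σ` sends into the fibre over `j`; `IsBalanced` says that this matrix is symmetric. -/
abbrev Cell (F : α → ι) (i j : ι) : Type _ := {x : α // p x = i ∧ F x = j}

def IsBalanced (F : α → ι) : Prop :=
  ∀ i j, Nat.card (Cell p F i j) = Nat.card (Cell p F j i)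

variable {p}

def cellSwap {σ : Equiv.Perm α} (hσ : Involutive σ) (i j : ι) :
    Cell p (p ∘ σ) i j ≃ Cell p (p ∘ σ) j i where
  toFun c := ⟨σ c, c.2.2, by simp [hσ c, c.2.1]⟩
  invFun c := ⟨σ c, c.2.2, by simp [hσ c, c.2.1]⟩
  left_inv c := Subtype.ext (hσ c)
  right_inv c := Subtype.ext (hσ c)

theorem isBalanced_comp {σ : Equiv.Perm α} (hσ : Involutive σ) : IsBalanced p (p ∘ σ) :=
  fun i j => Nat.card_congr (cellSwap hσ i j)

theorem range_apply_cell {σ : Equiv.Perm α} (hσ : Involutive σ) {F : α → ι} (hF : p ∘ σ = F)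
    (i j : ι) : Set.range (fun c : Cell p F i j => σ c) = {z | p z = j ∧ F z = i} := by
  subst hF
  ext z
  constructor
  · rintro ⟨c, rfl⟩
    exact ((cellSwap hσ i j) c).2
  · rintro hz
    exact ⟨(cellSwap hσ j i) ⟨z, hz⟩, hσ z⟩

theorem exists_perm_of_cellMaps {F : α → ι} (e : ∀ i j, Cell p F i j → Cell p F j i)
    (he : ∀ i j c, e j i (e i j c) = c) :
    ∃ σ : Equiv.Perm α, Involutive σ ∧ p ∘ σ = F ∧ ∀ i j (c : Cell p F i j), σ c = e i j c := by
  set f : α → α := fun x => e (p x) (F x) ⟨x, rfl, rfl⟩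
  have hf : ∀ i j (c : Cell p F i j), f c = e i j c := by
    rintro i j ⟨x, rfl, rfl⟩
    rfl
  have hinv : Involutive f := fun x => by
    rw [hf _ _ (e (p x) (F x) ⟨x, rfl, rfl⟩), he]
  exact ⟨hinv.toPerm f, hinv, funext fun x => (e (p x) (F x) ⟨x, rfl, rfl⟩).2.1, hf⟩

theorem isBalanced_comp_of_comp_eq {r : Equiv.Perm α} (hr : Involutive r) (hpr : p ∘ r = p)
    {F : α → ι} (hF : IsBalanced p F) : IsBalanced p (F ∘ r) := by
  have hcell : ∀ i j, Cell p (F ∘ r) i j ≃ Cell p F i j := fun i j =>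
    { toFun c := ⟨r c, by simpa [← congrFun hpr c.1] using c.2⟩
      invFun c := ⟨r c, by simpa [hr c.1, ← congrFun hpr c.1] using c.2⟩
      left_inv c := Subtype.ext (hr c)
      right_inv c := Subtype.ext (hr c) }
  intro i j
  rw [Nat.card_congr (hcell i j), Nat.card_congr (hcell j i), hF]

variable [LinearOrder α] [Finite α]

-- With `g = id` this covers involutions increasing on the fibres, with `g = toDual` decreasing.
theorem eq_of_comp_eq_of_strictMonoOn {β : Type*} [LinearOrder β] {g : α → β} (hg : Injective g)
    {σ τ : Equiv.Perm α} (hσ : Involutive σ) (hτ : Involutive τ) (hστ : p ∘ σ = p ∘ τ)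
    (hσg : ∀ i, StrictMonoOn (g ∘ σ) (p ⁻¹' {i})) (hτg : ∀ i, StrictMonoOn (g ∘ τ) (p ⁻¹' {i})) :
    σ = τ := by
  ext x
  have hmono : ∀ {π : Equiv.Perm α}, (∀ i, StrictMonoOn (g ∘ π) (p ⁻¹' {i})) →
      StrictMono fun c : Cell p (p ∘ σ) (p x) (p (σ x)) => g (π c) :=
    fun hπ c d hcd => hπ (p x) c.2.1 d.2.1 hcd
  have key := (StrictMono.range_inj (hmono hσg) (hmono hτg)).mp <| by
    rw [Set.range_comp' g, Set.range_comp' g, range_apply_cell hσ rfl,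
      range_apply_cell hτ hστ.symm]
  exact hg (congrFun key ⟨x, rfl, rfl⟩)

variable [PartialOrder ι]

theorem exists_strictMonoOn_of_isBalanced (hp : Monotone p) {F : α → ι} (hF : IsBalanced p F)
    (hFm : ∀ i, MonotoneOn F (p ⁻¹' {i})) :
    ∃ σ : Equiv.Perm α, Involutive σ ∧ (∀ i, StrictMonoOn σ (p ⁻¹' {i})) ∧ p ∘ σ = F := by
  let e : ∀ i j, Cell p F i j ≃o Cell p F j i := fun i j =>
    (nonempty_orderIso_of_natCard_eq (hF i j)).some
  -- An order automorphism of a finite linear order is the identity.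
  have he : ∀ i j c, e j i (e i j c) = c := fun i j c =>
    congrArg (· c) (Subsingleton.elim ((e i j).trans (e j i)) (OrderIso.refl _))
  obtain ⟨σ, hσ, hσF, hσe⟩ := exists_perm_of_cellMaps (fun i j => e i j) he
  refine ⟨σ, hσ, fun i x hx y hy hxy => ?_, hσF⟩
  rcases (hFm i hx hy hxy.le).lt_or_eq with hlt | heq
  · apply hp.reflect_lt
    simpa [← hσF] using hlt
  · have hx' : p x = i ∧ F x = F x := ⟨hx, rfl⟩
    have hy' : p y = i ∧ F y = F x := ⟨hy, heq.symm⟩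
    rw [hσe i (F x) ⟨x, hx'⟩, hσe i (F x) ⟨y, hy'⟩]
    exact (e i (F x)).strictMono (show (⟨x, hx'⟩ : Cell p F i (F x)) < ⟨y, hy'⟩ from hxy)

theorem exists_strictAntiOn_of_isBalanced (hp : Monotone p) {F : α → ι} (hF : IsBalanced p F)
    (hFa : ∀ i, AntitoneOn F (p ⁻¹' {i})) :
    ∃ σ : Equiv.Perm α, Involutive σ ∧ (∀ i, StrictAntiOn σ (p ⁻¹' {i})) ∧ p ∘ σ = F := by
  let e : ∀ i j, Cell p F i j ≃o (Cell p F j i)ᵒᵈ := fun i j =>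
    (nonempty_orderIso_of_natCard_eq (Y := (Cell p F j i)ᵒᵈ) (hF i j)).some
  have he : ∀ i j c, OrderDual.ofDual (e j i (OrderDual.ofDual (e i j c))) = c := fun i j c =>
    congrArg (· c) (Subsingleton.elim ((e i j).trans (e j i).dual) (OrderIso.dualDual _))
  obtain ⟨σ, hσ, hσF, hσe⟩ :=
    exists_perm_of_cellMaps (fun i j c => OrderDual.ofDual (e i j c)) he
  refine ⟨σ, hσ, fun i x hx y hy hxy => ?_, hσF⟩
  rcases (hFa i hx hy hxy.le).lt_or_eq with hlt | heq
  · apply hp.reflect_lt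
    simpa [← hσF] using hlt
  · have hx' : p x = i ∧ F x = F y := ⟨hx, heq.symm⟩
    have hy' : p y = i ∧ F y = F y := ⟨hy, rfl⟩
    rw [hσe i (F y) ⟨x, hx'⟩, hσe i (F y) ⟨y, hy'⟩]
    exact (e i (F y)).strictMono (show (⟨x, hx'⟩ : Cell p F i (F y)) < ⟨y, hy'⟩ from hxy)

theorem natCard_involutive_strictMonoOn (hp : Monotone p) :
    Nat.card {σ : Equiv.Perm α // Involutive σ ∧ ∀ i, StrictMonoOn σ (p ⁻¹' {i})} =
      Nat.card {F : α → ι // IsBalanced p F ∧ ∀ i, MonotoneOn F (p ⁻¹' {i})} := by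
  refine Nat.card_congr <| Equiv.ofBijective
    (fun σ => ⟨p ∘ σ.1, isBalanced_comp σ.2.1, fun i => hp.comp_monotoneOn (σ.2.2 i).monotoneOn⟩)
    ⟨fun σ τ h => Subtype.ext ?_, fun F => ?_⟩
  · exact eq_of_comp_eq_of_strictMonoOn (g := id) injective_id σ.2.1 τ.2.1
      (congrArg Subtype.val h) σ.2.2 τ.2.2
  · obtain ⟨σ, hσ, hσm, hσF⟩ := exists_strictMonoOn_of_isBalanced hp F.2.1 F.2.2
    exact ⟨⟨σ, hσ, hσm⟩, Subtype.ext hσF⟩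

theorem natCard_involutive_strictAntiOn (hp : Monotone p) :
    Nat.card {σ : Equiv.Perm α // Involutive σ ∧ ∀ i, StrictAntiOn σ (p ⁻¹' {i})} =
      Nat.card {F : α → ι // IsBalanced p F ∧ ∀ i, AntitoneOn F (p ⁻¹' {i})} := by
  refine Nat.card_congr <| Equiv.ofBijective
    (fun σ => ⟨p ∘ σ.1, isBalanced_comp σ.2.1, fun i => hp.comp_antitoneOn (σ.2.2 i).antitoneOn⟩)
    ⟨fun σ τ h => Subtype.ext ?_, fun F => ?_⟩
  · exact eq_of_comp_eq_of_strictMonoOn (g := OrderDual.toDual) OrderDual.toDual.injective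
      σ.2.1 τ.2.1 (congrArg Subtype.val h) (fun i => (σ.2.2 i).dual_right)
      (fun i => (τ.2.2 i).dual_right)
  · obtain ⟨σ, hσ, hσa, hσF⟩ := exists_strictAntiOn_of_isBalanced hp F.2.1 F.2.2
    exact ⟨⟨σ, hσ, hσa⟩, Subtype.ext hσF⟩

theorem natCard_balanced_monotoneOn_eq_antitoneOn (hp : Monotone p) :
    Nat.card {F : α → ι // IsBalanced p F ∧ ∀ i, MonotoneOn F (p ⁻¹' {i})} =
      Nat.card {F : α → ι // IsBalanced p F ∧ ∀ i, AntitoneOn F (p ⁻¹' {i})} := by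
  obtain ⟨r, hr, hra, hpr⟩ := exists_strictAntiOn_of_isBalanced hp (F := p)
    (fun i j => Nat.card_congr (Equiv.subtypeEquivRight fun _ => and_comm))
    (fun i x hx y hy _ => by rw [hx, hy])
  -- `r` reverses every fibre, so precomposing with it exchanges monotone and antitone maps.
  have hmaps : ∀ i, Set.MapsTo r (p ⁻¹' {i}) (p ⁻¹' {i}) := fun i x hx => by
    simpa [← congrFun hpr x] using hx
  exact Nat.card_congr
    { toFun F := ⟨F.1 ∘ r, isBalanced_comp_of_comp_eq hr hpr F.2.1,
        fun i x hx y hy hxy => F.2.2 i (hmaps i hy) (hmaps i hx) ((hra i).antitoneOn hx hy hxy)⟩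
      invFun F := ⟨F.1 ∘ r, isBalanced_comp_of_comp_eq hr hpr F.2.1,
        fun i x hx y hy hxy => F.2.2 i (hmaps i hy) (hmaps i hx) ((hra i).antitoneOn hx hy hxy)⟩
      left_inv F := Subtype.ext (funext fun x => congrArg F.1 (hr x))
      right_inv F := Subtype.ext (funext fun x => congrArg F.1 (hr x)) }

theorem natCard_involutive_strictMonoOn_eq_strictAntiOn (hp : Monotone p) :
    Nat.card {σ : Equiv.Perm α // Involutive σ ∧ ∀ i, StrictMonoOn σ (p ⁻¹' {i})} =
      Nat.card {σ : Equiv.Perm α // Involutive σ ∧ ∀ i, StrictAntiOn σ (p ⁻¹' {i})} := by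
  rw [natCard_involutive_strictMonoOn hp, natCard_involutive_strictAntiOn hp,
    natCard_balanced_monotoneOn_eq_antitoneOn hp]

end Cells

section Blocks

/- The block of position `k` when cuts are made just before every element of `S`; a descent
`i ∈ DesSet n σ` compares the zero-based positions `i - 1` and `i`, which lie on either side of
a cut at `i`. -/
def blockIndex (S : Finset ℕ) (k : ℕ) : ℕ := #(S.filter (· ≤ k))

theorem blockIndex_mono (S : Finset ℕ) : Monotone (blockIndex S) := fun _ _ hab =>
  card_le_card (monotone_filter_right S fun _ _ hk => hk.trans hab)

theorem blockIndex_eq_iff {S : Finset ℕ} {x y : ℕ} (hxy : x ≤ y) :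
    blockIndex S x = blockIndex S y ↔ ∀ k, x < k → k ≤ y → k ∉ S := by
  have hsub : S.filter (· ≤ x) ⊆ S.filter (· ≤ y) :=
    monotone_filter_right S fun _ _ hk => hk.trans hxy
  constructor
  · intro h k hxk hky hkS
    have heq := eq_of_subset_of_card_le hsub h.ge
    have : k ∈ S.filter (· ≤ x) := heq ▸ mem_filter.mpr ⟨hkS, hky⟩
    exact absurd (mem_filter.mp this).2 (not_le.mpr hxk)
  · intro h
    refine congrArg card (filter_congr fun k hkS => ⟨fun hk => hk.trans hxy, fun hk => ?_⟩)
    by_contra hkx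
    exact h k (not_le.mp hkx) hk hkS

theorem strictMonoOn_blockIndex_fibers_iff {n : ℕ} {β : Type*} [Preorder β] {f : Fin n → β}
    {S : Finset ℕ} :
    (∀ b, StrictMonoOn f ((fun x : Fin n => blockIndex S x) ⁻¹' {b})) ↔
      ∀ k (hk : k + 1 < n), k + 1 ∉ S → f ⟨k, by omega⟩ < f ⟨k + 1, hk⟩ := by
  constructor
  · intro h k hk hkS
    refine h (blockIndex S k) rfl ?_ (Fin.mk_lt_mk.mpr k.lt_succ_self)
    exact ((blockIndex_eq_iff k.le_succ).mpr fun m hkm hm => by rwa [show m = k + 1 by omega]).symm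
  · intro h b x hx y hy hxy
    have hblock := (blockIndex_eq_iff hxy.le).mp (hx.trans hy.symm)
    let g : ℕ → β := fun k => if hk : k < n then f ⟨k, hk⟩ else f x
    have hg : StrictMonoOn g (Set.Icc x y) := by
      refine strictMonoOn_of_lt_add_one Set.ordConnected_Icc fun k _ hk hk1 => ?_
      have hkn : k + 1 < n := lt_of_le_of_lt hk1.2 y.isLt
      simpa [g, hkn, Nat.lt_of_succ_lt hkn] using
        h k hkn (hblock (k + 1) (by simp only [Set.mem_Icc] at hk; omega) hk1.2)
    simpa [g] using hg ⟨le_rfl, hxy.le⟩ ⟨hxy.le, le_rfl⟩ hxy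

theorem strictAntiOn_blockIndex_fibers_iff {n : ℕ} {β : Type*} [Preorder β] {f : Fin n → β}
    {S : Finset ℕ} :
    (∀ b, StrictAntiOn f ((fun x : Fin n => blockIndex S x) ⁻¹' {b})) ↔
      ∀ k (hk : k + 1 < n), k + 1 ∉ S → f ⟨k + 1, hk⟩ < f ⟨k, by omega⟩ := by
  simp_rw [← strictMonoOn_toDual_comp_iff]
  exact strictMonoOn_blockIndex_fibers_iff

end Blocks

section Powerset

theorem eq_of_sum_powerset_eq {β M : Type*} [DecidableEq β] [AddCommMonoid M] [IsCancelAdd M]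
    {f g : Finset β → M} {S : Finset β}
    (h : ∀ T ⊆ S, ∑ U ∈ T.powerset, f U = ∑ U ∈ T.powerset, g U) : f S = g S := by
  induction S using Finset.strongInduction with
  | H S ih =>
    have hproper : ∑ U ∈ S.powerset.erase S, f U = ∑ U ∈ S.powerset.erase S, g U :=
      sum_congr rfl fun U hU => by
        obtain ⟨hUS, hU⟩ := (mem_erase.mp hU).imp_right mem_powerset.mp
        exact ih U (ssubset_of_subset_of_ne hU hUS) fun T hT => h T (hT.trans hU)
    have := h S subset_rfl
    rw [← add_sum_erase _ _ (mem_powerset_self S), ← add_sum_erase _ g (mem_powerset_self S),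
      hproper] at this
    exact add_right_cancel this

theorem card_filter_subset_eq_sum_powerset {X β : Type*} [DecidableEq β] (s : Finset X)
    (f : X → Finset β) (S : Finset β) :
    #(s.filter (f · ⊆ S)) = ∑ T ∈ S.powerset, #(s.filter (f · = T)) := by
  rw [card_eq_sum_card_fiberwise fun x hx => mem_powerset.mpr (mem_filter.mp hx).2]
  refine sum_congr rfl fun T hT => congrArg card ?_
  rw [filter_filter]
  exact filter_congr fun x _ => ⟨And.right, fun hx => ⟨hx ▸ mem_powerset.mp hT, hx⟩⟩

end Powerset

theorem sum_Icc_one_sub_one_id (n : ℕ) : ∑ i ∈ Icc 1 (n - 1), i = n.choose 2 := by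
  rw [Nat.choose_two_right, ← sum_range_id]
  rcases n with _ | n
  · rfl
  · rw [sum_range_succ', Nat.add_sub_cancel, range_eq_Ico, sum_Ico_add' (fun k => k) 0 n 1]
    rfl

section Descents

variable {n : ℕ} {σ : Equiv.Perm (Fin n)} {S : Finset ℕ}

theorem mem_desSet_add_one_iff {k : ℕ} (hk : k + 1 < n) :
    k + 1 ∈ DesSet n σ ↔ σ ⟨k + 1, hk⟩ < σ ⟨k, by omega⟩ := by
  rw [DesSet, mem_filter, mem_Icc, Nat.add_sub_cancel, permFun, permFun, dif_pos hk,
    dif_pos (Nat.lt_of_succ_lt hk), Fin.lt_def]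
  omega

theorem exists_eq_add_one_of_mem_desSet {i : ℕ} (hi : i ∈ DesSet n σ) :
    ∃ k, k + 1 < n ∧ i = k + 1 := by
  obtain ⟨⟨hi1, hin⟩, -⟩ := mem_filter.mp hi |>.imp_left mem_Icc.mp
  exact ⟨i - 1, by omega, by omega⟩

theorem desSet_subset_iff :
    DesSet n σ ⊆ S ↔ ∀ k (hk : k + 1 < n), k + 1 ∉ S → σ ⟨k, by omega⟩ < σ ⟨k + 1, hk⟩ := by
  constructor
  · intro h k hk hkS
    refine lt_of_le_of_ne (not_lt.mp fun hdes => hkS (h ((mem_desSet_add_one_iff hk).mpr hdes))) ?_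
    simp [Fin.ext_iff]
  · intro h i hi
    obtain ⟨k, hk, rfl⟩ := exists_eq_add_one_of_mem_desSet hi
    by_contra hkS
    exact (h k hk hkS).asymm ((mem_desSet_add_one_iff hk).mp hi)

theorem sdiff_subset_desSet_iff :
    Icc 1 (n - 1) \ S ⊆ DesSet n σ ↔
      ∀ k (hk : k + 1 < n), k + 1 ∉ S → σ ⟨k + 1, hk⟩ < σ ⟨k, by omega⟩ := by
  constructor
  · intro h k hk hkS
    exact (mem_desSet_add_one_iff hk).mp (h (mem_sdiff.mpr ⟨mem_Icc.mpr ⟨by omega, by omega⟩, hkS⟩))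
  · intro h i hi
    obtain ⟨⟨hi1, hin⟩, hiS⟩ := mem_sdiff.mp hi |>.imp_left mem_Icc.mp
    obtain ⟨k, rfl⟩ : ∃ k, i = k + 1 := ⟨i - 1, by omega⟩
    exact (mem_desSet_add_one_iff (by omega)).mpr (h k (by omega) hiS)

theorem card_filter_invols_eq_natCard (P : Equiv.Perm (Fin n) → Prop) [DecidablePred P] :
    #((Invols n).filter P) = Nat.card {σ : Equiv.Perm (Fin n) // Involutive σ ∧ P σ} := by
  rw [Invols, filter_filter, ← Fintype.card_subtype, ← Nat.card_eq_fintype_card]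
  refine Nat.card_congr (Equiv.subtypeEquivRight fun σ => and_congr_left' ?_)
  simp [Equiv.ext_iff, Involutive]

theorem card_desSet_subset_eq_card_sdiff_subset_desSet :
    #((Invols n).filter (DesSet n · ⊆ S)) =
      #((Invols n).filter (Icc 1 (n - 1) \ S ⊆ DesSet n ·)) := by
  have hp : Monotone fun x : Fin n => blockIndex S x :=
    (blockIndex_mono S).comp Fin.val_strictMono.monotone
  rw [card_filter_invols_eq_natCard, card_filter_invols_eq_natCard]
  calc _ = Nat.card {σ : Equiv.Perm (Fin n) // Involutive σ ∧
          ∀ b, StrictMonoOn σ ((fun x : Fin n => blockIndex S x) ⁻¹' {b})} :=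
        Nat.card_congr <| Equiv.subtypeEquivRight fun σ =>
          and_congr_right' (desSet_subset_iff.trans strictMonoOn_blockIndex_fibers_iff.symm)
    _ = Nat.card {σ : Equiv.Perm (Fin n) // Involutive σ ∧
          ∀ b, StrictAntiOn σ ((fun x : Fin n => blockIndex S x) ⁻¹' {b})} :=
        natCard_involutive_strictMonoOn_eq_strictAntiOn hp
    _ = _ := Nat.card_congr <| Equiv.subtypeEquivRight fun σ =>
          and_congr_right' (strictAntiOn_blockIndex_fibers_iff.trans sdiff_subset_desSet_iff.symm)

def involDesSetCount (n : ℕ) (T : Finset ℕ) : ℕ := #((Invols n).filter (DesSet n · = T))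

theorem desSet_subset_Icc : DesSet n σ ⊆ Icc 1 (n - 1) :=
  filter_subset _ _

theorem involDesSetCount_sdiff (hS : S ⊆ Icc 1 (n - 1)) :
    involDesSetCount n S = involDesSetCount n (Icc 1 (n - 1) \ S) := by
  refine eq_of_sum_powerset_eq (g := fun T => involDesSetCount n (Icc 1 (n - 1) \ T)) fun T hT => ?_
  calc ∑ U ∈ T.powerset, involDesSetCount n U
      = #((Invols n).filter (DesSet n · ⊆ T)) := (card_filter_subset_eq_sum_powerset _ _ _).symm
    _ = #((Invols n).filter (Icc 1 (n - 1) \ DesSet n · ⊆ T)) := by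
      rw [card_desSet_subset_eq_card_sdiff_subset_desSet]
      exact congrArg card (filter_congr fun σ _ => sdiff_le_comm)
    _ = ∑ U ∈ T.powerset, involDesSetCount n (Icc 1 (n - 1) \ U) := by
      rw [card_filter_subset_eq_sum_powerset]
      refine sum_congr rfl fun U hU => congrArg card (filter_congr fun σ _ => ?_)
      have hUR := (mem_powerset.mp hU).trans (hT.trans hS)
      constructor
      · rintro rfl
        exact (Finset.sdiff_sdiff_eq_self desSet_subset_Icc).symm
      · rintro hσ
        rw [hσ, Finset.sdiff_sdiff_eq_self hUR]

theorem card_filter_majStat_eq_sum (k : ℕ) :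
    #((Invols n).filter (majStat n · = k)) =
      ∑ T ∈ (Icc 1 (n - 1)).powerset.filter (∑ i ∈ ·, i = k), involDesSetCount n T := by
  have hmaps : ∀ σ ∈ (Invols n).filter (majStat n · = k),
      DesSet n σ ∈ (Icc 1 (n - 1)).powerset.filter (∑ i ∈ ·, i = k) := fun σ hσ =>
    mem_filter.mpr ⟨mem_powerset.mpr desSet_subset_Icc, (mem_filter.mp hσ).2⟩
  rw [card_eq_sum_card_fiberwise hmaps]
  refine sum_congr rfl fun T hT => congrArg card ?_
  rw [filter_filter]
  exact filter_congr fun σ _ =>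
    ⟨And.right, fun hσ => ⟨(congrArg (∑ i ∈ ·, i) hσ).trans (mem_filter.mp hT).2, hσ⟩⟩

end Descents

end InvolutionBlocks

open InvolutionBlocks

theorem involution_major_index_polynomial_symmetric_general (n : ℕ) (j : ℕ)
    (hj : j ≤ n.choose 2) :
    ((Invols n).filter (fun σ => majStat n σ = j)).card =
      ((Invols n).filter (fun σ => majStat n σ = n.choose 2 - j)).card := by
  set R := Icc 1 (n - 1)
  have hweight : ∀ T ⊆ R, ∑ i ∈ R \ T, i + ∑ i ∈ T, i = n.choose 2 := fun T hT => by
    rw [sum_sdiff hT, sum_Icc_one_sub_one_id]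
  have hcompl : ∀ k ≤ n.choose 2, ∀ T ∈ R.powerset.filter (∑ i ∈ ·, i = k),
      R \ T ∈ R.powerset.filter (∑ i ∈ ·, i = n.choose 2 - k) := fun k hk T hT => by
    obtain ⟨hTR, hTk⟩ := (mem_filter.mp hT).imp_left mem_powerset.mp
    exact mem_filter.mpr ⟨mem_powerset.mpr sdiff_subset, by have := hweight T hTR; omega⟩
  rw [card_filter_majStat_eq_sum, card_filter_majStat_eq_sum]
  refine sum_nbij' (R \ ·) (R \ ·) (hcompl j hj) ?_ ?_ ?_ ?_
  · simpa only [Nat.sub_sub_self hj] using hcompl (n.choose 2 - j) (Nat.sub_le _ _)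
  · exact fun T hT => Finset.sdiff_sdiff_eq_self (mem_powerset.mp (mem_filter.mp hT).1)
  · exact fun T hT => Finset.sdiff_sdiff_eq_self (mem_powerset.mp (mem_filter.mp hT).1)
  · exact fun T hT => involDesSetCount_sdiff (mem_powerset.mp (mem_filter.mp hT).1)

theorem involution_major_index_polynomial_symmetric (n : ℕ) (hn : 1 ≤ n) (j : ℕ)
    (hj : j ≤ n.choose 2) :
    ((Invols n).filter (fun σ => majStat n σ = j)).card =
      ((Invols n).filter (fun σ => majStat n σ = n.choose 2 - j)).card :=
  involution_major_index_polynomial_symmetric_general n j hj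
end
end

section
/- For all n ≥ 0, the inversion polynomials over involutions satisfy the recurrence (1−q²)·I_{n+2}^{inv}(q) = (1−q²)·I_{n+1}^{inv}(q) + q(1−q^{2(n+1)})·I_n^{inv}(q), where I_n^{inv}(q) = Σ_{σ∈I_n} q^{inv(σ)}, with I_0^{inv}(q) = I_1^{inv}(q) = 1. -/
noncomputable section
open Finset Polynomial

/-- The number of inversions of a permutation of `Fin n`. -/
def invStat {n : ℕ} (σ : Equiv.Perm (Fin n)) : ℕ :=
  ((Finset.univ : Finset (Fin n × Fin n)).filter
    (fun p => p.1 < p.2 ∧ σ p.2 < σ p.1)).card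

/-- The generating polynomial of inversions over involutions of `S_n`. -/
def IPoly (n : ℕ) : Polynomial ℚ := ∑ σ ∈ Invols n, Polynomial.X ^ invStat σ

/-- The generating polynomial of inversions over fixed-point-free involutions of `S_n`. -/
def JPoly (n : ℕ) : Polynomial ℚ := ∑ σ ∈ FPFInvols n, Polynomial.X ^ invStat σ

/-! ### Auxiliary constructions -/

open Equiv

/-- Insert a fixed point at position `p`. -/
def insF {m : ℕ} (p : Fin (m + 1)) (σ : Equiv.Perm (Fin m)) : Equiv.Perm (Fin (m + 1)) :=
  ((finSuccEquiv' p).trans σ.optionCongr).trans (finSuccEquiv' p).symm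

@[simp] lemma insF_at {m : ℕ} (p : Fin (m + 1)) (σ : Equiv.Perm (Fin m)) :
    insF p σ p = p := by
  simp [insF, finSuccEquiv'_at]

@[simp] lemma insF_succAbove {m : ℕ} (p : Fin (m + 1)) (σ : Equiv.Perm (Fin m)) (j : Fin m) :
    insF p σ (p.succAbove j) = p.succAbove (σ j) := by
  simp [insF, finSuccEquiv'_succAbove]

lemma insF_surj {m : ℕ} (p : Fin (m + 1)) (τ : Equiv.Perm (Fin (m + 1))) (hp : τ p = p) :
    ∃ σ : Equiv.Perm (Fin m), insF p σ = τ := by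
  refine ⟨Equiv.removeNone ((finSuccEquiv' p).permCongr τ), ?_⟩
  refine Equiv.ext fun x => ?_
  rcases eq_or_ne x p with rfl | hx
  · rw [insF_at, hp]
  · obtain ⟨j, rfl⟩ := Fin.exists_succAbove_eq hx
    rw [insF_succAbove]
    have hne : τ (p.succAbove j) ≠ p := by
      intro h
      have : p.succAbove j = p := τ.injective (by rw [h, hp])
      exact Fin.succAbove_ne p j this
    obtain ⟨j', hj'⟩ := Fin.exists_succAbove_eq hne
    have hsome : ∃ x', ((finSuccEquiv' p).permCongr τ) (some j) = some x' := by
      refine ⟨j', ?_⟩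
      rw [Equiv.permCongr_apply, finSuccEquiv'_symm_some, ← hj', finSuccEquiv'_succAbove]
    have h := Equiv.removeNone_some ((finSuccEquiv' p).permCongr τ) hsome
    rw [Equiv.permCongr_apply, finSuccEquiv'_symm_some, ← hj',
      finSuccEquiv'_succAbove] at h
    rw [Option.some_injective _ h]
    exact hj'

/-- Extend a permutation of `Fin (m+1)` by a fixed point at `last`. -/
def extL {m : ℕ} (σ : Equiv.Perm (Fin (m + 1))) : Equiv.Perm (Fin (m + 2)) :=
  insF (Fin.last (m + 1)) σ

@[simp] lemma extL_last {m : ℕ} (σ : Equiv.Perm (Fin (m + 1))) :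
    extL σ (Fin.last (m + 1)) = Fin.last (m + 1) := insF_at _ _

@[simp] lemma extL_castSucc {m : ℕ} (σ : Equiv.Perm (Fin (m + 1))) (i : Fin (m + 1)) :
    extL σ i.castSucc = (σ i).castSucc := by
  have h := insF_succAbove (Fin.last (m + 1)) σ i
  rwa [Fin.succAbove_last] at h

/-- Embedding of `Fin n` into `Fin (n+2)` skipping `k.castSucc` and `last`. -/
def emb2 {n : ℕ} (k : Fin (n + 1)) (j : Fin n) : Fin (n + 2) := (k.succAbove j).castSucc

lemma emb2_injective {n : ℕ} (k : Fin (n + 1)) : Function.Injective (emb2 k) :=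
  fun _ _ h => Fin.succAbove_right_injective (Fin.castSucc_injective _ h)

lemma emb2_ne_castSucc {n : ℕ} (k : Fin (n + 1)) (j : Fin n) :
    emb2 k j ≠ k.castSucc := fun h =>
  Fin.succAbove_ne k j (Fin.castSucc_injective _ h)

lemma emb2_lt_last {n : ℕ} (k : Fin (n + 1)) (j : Fin n) :
    emb2 k j < Fin.last (n + 1) := Fin.castSucc_lt_last _

lemma emb2_ne_last {n : ℕ} (k : Fin (n + 1)) (j : Fin n) :
    emb2 k j ≠ Fin.last (n + 1) := (emb2_lt_last k j).ne

lemma castSucc_lt_emb2_iff {n : ℕ} (k : Fin (n + 1)) (j : Fin n) :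
    k.castSucc < emb2 k j ↔ (k : ℕ) ≤ (j : ℕ) := by
  rw [emb2, Fin.castSucc_lt_castSucc_iff, Fin.lt_succAbove_iff_le_castSucc, Fin.le_def,
    Fin.coe_castSucc]

lemma emb2_lt_emb2_iff {n : ℕ} (k : Fin (n + 1)) (i j : Fin n) :
    emb2 k i < emb2 k j ↔ i < j := by
  rw [emb2, emb2, Fin.castSucc_lt_castSucc_iff, Fin.succAbove_lt_succAbove_iff]

/-- The trichotomy for elements of `Fin (n+2)`. -/
lemma cases3 {n : ℕ} (k : Fin (n + 1)) (x : Fin (n + 2)) :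
    x = Fin.last (n + 1) ∨ x = k.castSucc ∨ ∃ j : Fin n, x = emb2 k j := by
  rcases eq_or_ne x (Fin.last (n + 1)) with rfl | hx
  · exact Or.inl rfl
  · obtain ⟨y, rfl⟩ := Fin.exists_castSucc_eq.mpr hx
    rcases eq_or_ne y k with rfl | hy
    · exact Or.inr (Or.inl rfl)
    · obtain ⟨j, rfl⟩ := Fin.exists_succAbove_eq hy
      exact Or.inr (Or.inr ⟨j, rfl⟩)

/-- Insert the transposition `(k.castSucc, last)` around a permutation of `Fin n`. -/
def pairB {n : ℕ} (k : Fin (n + 1)) (σ : Equiv.Perm (Fin n)) : Equiv.Perm (Fin (n + 2)) :=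
  Equiv.swap k.castSucc (Fin.last (n + 1)) * extL (insF k σ)

@[simp] lemma pairB_last {n : ℕ} (k : Fin (n + 1)) (σ : Equiv.Perm (Fin n)) :
    pairB k σ (Fin.last (n + 1)) = k.castSucc := by
  rw [pairB, Equiv.Perm.mul_apply, extL_last, Equiv.swap_apply_right]

@[simp] lemma pairB_castSucc {n : ℕ} (k : Fin (n + 1)) (σ : Equiv.Perm (Fin n)) :
    pairB k σ k.castSucc = Fin.last (n + 1) := by
  rw [pairB, Equiv.Perm.mul_apply, extL_castSucc, insF_at, Equiv.swap_apply_left]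

@[simp] lemma pairB_emb2 {n : ℕ} (k : Fin (n + 1)) (σ : Equiv.Perm (Fin n)) (j : Fin n) :
    pairB k σ (emb2 k j) = emb2 k (σ j) := by
  rw [pairB, Equiv.Perm.mul_apply, emb2, extL_castSucc, insF_succAbove]
  exact Equiv.swap_apply_of_ne_of_ne (emb2_ne_castSucc k (σ j)) (emb2_ne_last k (σ j))

/-! ### Inversion statistics -/

lemma invStat_eq {m : ℕ} (τ : Equiv.Perm (Fin m)) :
    invStat τ = ∑ x : Fin m, ∑ y : Fin m, if x < y ∧ τ y < τ x then 1 else 0 := by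
  rw [invStat, Finset.card_filter, Fintype.sum_prod_type]

lemma invStat_extL {m : ℕ} (σ : Equiv.Perm (Fin (m + 1))) :
    invStat (extL σ) = invStat σ := by
  have peelC : ∀ F : Fin (m + 2) → ℕ,
      ∑ x : Fin (m + 2), F x = (∑ j : Fin (m + 1), F j.castSucc) + F (Fin.last (m + 1)) :=
    fun F => Fin.sum_univ_castSucc F
  have hnl : ∀ y : Fin (m + 1), ¬ (Fin.last (m + 1) < y.castSucc) :=
    fun y => (Fin.castSucc_lt_last y).asymm
  have hnl' : ¬ (Fin.last (m + 1) < Fin.last (m + 1)) := lt_irrefl _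
  rw [invStat_eq, invStat_eq]
  simp only [peelC, extL_castSucc, extL_last, Fin.castSucc_lt_castSucc_iff,
    Fin.castSucc_lt_last, hnl, hnl', false_and, and_false, if_false, true_and,
    Finset.sum_const_zero, add_zero, lt_irrefl]

lemma count_le {n : ℕ} (k : Fin (n + 1)) :
    (∑ j : Fin n, if (k : ℕ) ≤ (j : ℕ) then (1 : ℕ) else 0) = n - k := by
  rw [Fin.sum_univ_eq_sum_range (fun i => if (k : ℕ) ≤ i then (1 : ℕ) else 0) n,
    ← Finset.card_filter]
  have : (Finset.range n).filter (fun i => (k : ℕ) ≤ i) = Finset.Ico (k : ℕ) n := by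
    ext i
    simp only [Finset.mem_filter, Finset.mem_range, Finset.mem_Ico]
    omega
  rw [this, Nat.card_Ico]

lemma count_sigma {n : ℕ} (σ : Equiv.Perm (Fin n)) (k : Fin (n + 1)) :
    (∑ j : Fin n, if (k : ℕ) ≤ ((σ j) : ℕ) then (1 : ℕ) else 0) = n - k := by
  rw [Equiv.sum_comp σ (fun m => if (k : ℕ) ≤ (m : ℕ) then (1 : ℕ) else 0)]
  exact count_le k

lemma invStat_pairB {n : ℕ} (k : Fin (n + 1)) (σ : Equiv.Perm (Fin n)) :
    invStat (pairB k σ) = invStat σ + (2 * (n - (k : ℕ)) + 1) := by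
  have peel : ∀ F : Fin (n + 2) → ℕ,
      ∑ x : Fin (n + 2), F x
        = F (Fin.last (n + 1)) + F k.castSucc + ∑ j : Fin n, F (emb2 k j) := by
    intro F
    rw [Fin.sum_univ_succAbove F (Fin.last (n + 1)),
      Fin.sum_univ_succAbove (fun y => F ((Fin.last (n + 1)).succAbove y)) k]
    simp only [Fin.succAbove_last, emb2]
    ring
  have hnl : ∀ y : Fin (n + 1), ¬ (Fin.last (n + 1) < y.castSucc) :=
    fun y => (Fin.castSucc_lt_last y).asymm
  have hne : ∀ j : Fin n, ¬ (Fin.last (n + 1) < emb2 k j) := fun j => hnl _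
  rw [invStat_eq]
  simp only [peel, pairB_last, pairB_castSucc, pairB_emb2, hnl, hne,
    lt_irrefl, false_and, and_false, if_false, Fin.castSucc_lt_last, emb2_lt_last,
    true_and, and_true, if_true, castSucc_lt_emb2_iff, emb2_lt_emb2_iff,
    Finset.sum_const_zero, add_zero, zero_add, Finset.sum_add_distrib]
  rw [count_le, count_sigma, invStat_eq]
  omega

/-! ### Involution properties -/

lemma sq_apply {m : ℕ} {σ : Equiv.Perm (Fin m)} (h : σ * σ = 1) (x : Fin m) :
    σ (σ x) = x := by
  rw [← Equiv.Perm.mul_apply, h, Equiv.Perm.one_apply]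

lemma extL_invol {m : ℕ} {σ : Equiv.Perm (Fin (m + 1))} (h : σ * σ = 1) :
    extL σ * extL σ = 1 := by
  ext x
  refine Fin.lastCases ?_ (fun i => ?_) x
  · simp [Equiv.Perm.mul_apply]
  · simp [Equiv.Perm.mul_apply, sq_apply h]

lemma pairB_invol {n : ℕ} {σ : Equiv.Perm (Fin n)} (k : Fin (n + 1)) (h : σ * σ = 1) :
    pairB k σ * pairB k σ = 1 := by
  ext x
  rcases cases3 k x with rfl | rfl | ⟨j, rfl⟩
  · simp [Equiv.Perm.mul_apply]
  · simp [Equiv.Perm.mul_apply]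
  · simp [Equiv.Perm.mul_apply, sq_apply h]

/-! ### The recurrence on IPoly -/

lemma fiber_last (n : ℕ) :
    ∑ τ ∈ (Invols (n + 2)).filter
        (fun τ => τ (Fin.last (n + 1)) = Fin.last (n + 1)),
      (X : Polynomial ℚ) ^ invStat τ = IPoly (n + 1) := by
  rw [IPoly]
  symm
  refine Finset.sum_bij (fun σ _ => extL σ) ?_ ?_ ?_ ?_
  · intro σ hσ
    simp only [Invols, Finset.mem_filter, Finset.mem_univ, true_and] at hσ ⊢
    exact ⟨extL_invol hσ, extL_last σ⟩
  · intro a₁ _ a₂ _ h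
    refine Equiv.ext fun i => Fin.castSucc_injective _ ?_
    have h' : extL a₁ = extL a₂ := h
    have : extL a₁ i.castSucc = extL a₂ i.castSucc := by rw [h']
    simpa using this
  · intro τ hτ
    simp only [Invols, Finset.mem_filter, Finset.mem_univ, true_and] at hτ
    obtain ⟨hinv, hL⟩ := hτ
    obtain ⟨σ, hσ⟩ := insF_surj (Fin.last (n + 1)) τ hL
    have hext : extL σ = τ := hσ
    refine ⟨σ, ?_, hext⟩
    simp only [Invols, Finset.mem_filter, Finset.mem_univ, true_and]
    refine Equiv.ext fun i => Fin.castSucc_injective _ ?_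
    calc (σ (σ i)).castSucc = extL σ (extL σ i.castSucc) := by
          rw [extL_castSucc, extL_castSucc]
      _ = i.castSucc := by rw [hext]; exact sq_apply hinv _
  · intro σ _
    rw [invStat_extL]

lemma fiber_mid (n : ℕ) (k : Fin (n + 1)) :
    ∑ τ ∈ (Invols (n + 2)).filter
        (fun τ => τ (Fin.last (n + 1)) = k.castSucc),
      (X : Polynomial ℚ) ^ invStat τ
      = X ^ (2 * (n - (k : ℕ)) + 1) * IPoly n := by
  rw [IPoly, Finset.mul_sum]
  symm
  refine Finset.sum_bij (fun σ _ => pairB k σ) ?_ ?_ ?_ ?_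
  · intro σ hσ
    simp only [Invols, Finset.mem_filter, Finset.mem_univ, true_and] at hσ ⊢
    exact ⟨pairB_invol k hσ, pairB_last k σ⟩
  · intro a₁ _ a₂ _ h
    refine Equiv.ext fun j => emb2_injective k ?_
    have h' : pairB k a₁ = pairB k a₂ := h
    have : pairB k a₁ (emb2 k j) = pairB k a₂ (emb2 k j) := by rw [h']
    simpa using this
  · intro τ hτ
    simp only [Invols, Finset.mem_filter, Finset.mem_univ, true_and] at hτ
    obtain ⟨hinv, hL⟩ := hτ
    have hA : τ k.castSucc = Fin.last (n + 1) := by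
      have := sq_apply hinv (Fin.last (n + 1))
      rwa [hL] at this
    set ρ : Equiv.Perm (Fin (n + 2)) :=
      Equiv.swap k.castSucc (Fin.last (n + 1)) * τ with hρ
    have hρL : ρ (Fin.last (n + 1)) = Fin.last (n + 1) := by
      rw [hρ, Equiv.Perm.mul_apply, hL, Equiv.swap_apply_left]
    have hρa : ρ k.castSucc = k.castSucc := by
      rw [hρ, Equiv.Perm.mul_apply, hA, Equiv.swap_apply_right]
    have hρe : ∀ j : Fin n, ρ (emb2 k j) = τ (emb2 k j) := by
      intro j
      rw [hρ, Equiv.Perm.mul_apply]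
      refine Equiv.swap_apply_of_ne_of_ne ?_ ?_
      · intro h
        have heq : emb2 k j = Fin.last (n + 1) := by
          have h2 := sq_apply hinv (emb2 k j)
          rw [h] at h2
          rw [← h2, hA]
        exact emb2_ne_last k j heq
      · intro h
        have heq : emb2 k j = k.castSucc := by
          have h2 := sq_apply hinv (emb2 k j)
          rw [h] at h2
          rw [← h2, hL]
        exact emb2_ne_castSucc k j heq
    obtain ⟨σ₁, hσ₁⟩ := insF_surj (Fin.last (n + 1)) ρ hρL
    have hext : extL σ₁ = ρ := hσ₁
    have hσ₁k : σ₁ k = k := by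
      apply Fin.castSucc_injective
      have h1 : extL σ₁ k.castSucc = ρ k.castSucc := by rw [hext]
      rw [extL_castSucc] at h1
      rw [h1, hρa]
    obtain ⟨σ, hσ⟩ := insF_surj k σ₁ hσ₁k
    have hpe : ∀ j : Fin n, pairB k σ (emb2 k j) = τ (emb2 k j) := by
      intro j
      rw [pairB_emb2]
      have h1 : k.succAbove (σ j) = σ₁ (k.succAbove j) := by
        rw [← hσ, insF_succAbove]
      have h2 : (σ₁ (k.succAbove j)).castSucc = ρ (emb2 k j) := by
        rw [← extL_castSucc, hext, emb2]
      rw [emb2, h1, h2, hρe]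
    have hpτ : pairB k σ = τ := by
      refine Equiv.ext fun x => ?_
      rcases cases3 k x with rfl | rfl | ⟨j, rfl⟩
      · rw [pairB_last, hL]
      · rw [pairB_castSucc, hA]
      · exact hpe j
    refine ⟨σ, ?_, hpτ⟩
    simp only [Invols, Finset.mem_filter, Finset.mem_univ, true_and]
    refine Equiv.ext fun j => emb2_injective k ?_
    calc emb2 k (σ (σ j)) = pairB k σ (pairB k σ (emb2 k j)) := by
          rw [pairB_emb2, pairB_emb2]
      _ = emb2 k j := by rw [hpτ]; exact sq_apply hinv _
  · intro σ _
    rw [invStat_pairB]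
    ring

lemma IPoly_rec (n : ℕ) :
    IPoly (n + 2) = IPoly (n + 1)
      + ∑ k : Fin (n + 1), X ^ (2 * (n - (k : ℕ)) + 1) * IPoly n := by
  conv_lhs => rw [IPoly,
    ← Finset.sum_fiberwise (Invols (n + 2)) (fun τ => τ (Fin.last (n + 1)))
      (fun τ => (X : Polynomial ℚ) ^ invStat τ)]
  rw [Fin.sum_univ_succAbove (fun y => ∑ τ ∈ (Invols (n + 2)).filter
      (fun τ => τ (Fin.last (n + 1)) = y), (X : Polynomial ℚ) ^ invStat τ)
    (Fin.last (n + 1))]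
  rw [fiber_last n]
  congr 1
  refine Finset.sum_congr rfl fun k _ => ?_
  rw [Fin.succAbove_last]
  exact fiber_mid n k

lemma geom_aux (n : ℕ) :
    (1 - X ^ 2 : Polynomial ℚ) * ∑ k : Fin (n + 1), X ^ (2 * (n - (k : ℕ)) + 1)
      = X * (1 - X ^ (2 * (n + 1))) := by
  have h1 : (∑ k : Fin (n + 1), (X : Polynomial ℚ) ^ (2 * (n - (k : ℕ)) + 1))
      = ∑ j ∈ Finset.range (n + 1), X ^ (2 * j + 1) := by
    rw [Fin.sum_univ_eq_sum_range (fun i => (X : Polynomial ℚ) ^ (2 * (n - i) + 1)) (n + 1)]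
    have := Finset.sum_range_reflect (fun j => (X : Polynomial ℚ) ^ (2 * j + 1)) (n + 1)
    rw [← this]
    apply Finset.sum_congr rfl
    intro i hi
    simp only [Finset.mem_range] at hi
    have hni : n + 1 - 1 - i = n - i := by omega
    rw [hni]
  rw [h1]
  have h2 : ∀ j : ℕ, (X : Polynomial ℚ) ^ (2 * j + 1) = X * (X ^ 2) ^ j := by
    intro j
    rw [← pow_mul, pow_succ, pow_mul]
    ring
  simp only [h2, ← Finset.mul_sum]
  have h3 : ((X : Polynomial ℚ) ^ 2 - 1) * ∑ j ∈ Finset.range (n + 1), (X ^ 2) ^ j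
      = (X ^ 2) ^ (n + 1) - 1 := mul_geom_sum _ _
  have h4 : ((X : Polynomial ℚ) ^ 2) ^ (n + 1) = X ^ (2 * (n + 1)) := by rw [← pow_mul]
  rw [← h4]
  linear_combination (-(X : Polynomial ℚ)) * h3

theorem involution_inversion_recurrence :
    (∀ n : ℕ, (1 - X ^ 2) * IPoly (n + 2) =
      (1 - X ^ 2) * IPoly (n + 1) + X * (1 - X ^ (2 * (n + 1))) * IPoly n) ∧
    IPoly 0 = 1 ∧ IPoly 1 = 1 := by
  refine ⟨fun n => ?_, ?_, ?_⟩
  · rw [IPoly_rec n, mul_add, ← Finset.sum_mul, ← mul_assoc, geom_aux n]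
  · have h0 : Invols 0 = {1} :=
      Finset.eq_singleton_iff_unique_mem.mpr
        ⟨by simp [Invols], fun σ _ => Equiv.ext fun i => i.elim0⟩
    have hinv : invStat (1 : Equiv.Perm (Fin 0)) = 0 := by
      rw [invStat]
      apply Finset.card_eq_zero.mpr
      apply Finset.filter_false_of_mem
      intro p _
      exact fun h => p.1.elim0
    rw [IPoly, h0, Finset.sum_singleton, hinv, pow_zero]
  · have h1 : Invols 1 = {1} :=
      Finset.eq_singleton_iff_unique_mem.mpr
        ⟨by simp [Invols], fun σ _ => Equiv.ext fun i => Subsingleton.elim _ _⟩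
    have hinv : invStat (1 : Equiv.Perm (Fin 1)) = 0 := by
      rw [invStat]
      apply Finset.card_eq_zero.mpr
      apply Finset.filter_false_of_mem
      intro p _
      intro h
      exact absurd (Subsingleton.elim p.1 p.2 ▸ h.1) (lt_irrefl _)
    rw [IPoly, h1, Finset.sum_singleton, hinv, pow_zero]
end
end

section
/- For all n ≥ 0, the inversion polynomials over fixed-point-free involutions satisfy the recurrence (1−q²)·J_{n+2}^{inv}(q) = q(1−q^{2(n+1)})·J_n^{inv}(q), where J_n^{inv}(q) = Σ_{σ∈J_n} q^{inv(σ)}, with J_0^{inv}(q) = 1. -/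
noncomputable section
open Finset Polynomial

/-!
A fixed-point-free involution `σ` of `Fin (n + 2)` pairs the last point with some `k ≤ n`, and
deleting this pair leaves a fixed-point-free involution `τ` of `Fin n`; conversely every pair
`(k, τ)` arises. The new pair contributes `2 (n - k) + 1` inversions:
`(k, n + 1)` itself, `(k, j)` for the `n - k` points `j` strictly between them, and `(i, n + 1)`
for the `n - k` points `i` with `σ i > k`. Hence `J_{n+2} = (q + q³ + ⋯ + q^{2n+1}) J_n`, and the
geometric sum times `1 - q²` is `q (1 - q^{2(n+1)})`.
-/

namespace Fin
variable {n : ℕ}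

def avoid (k : Fin (n + 1)) : Fin n ↪o Fin (n + 2) :=
  (succAboveOrderEmb k).trans castSuccOrderEmb

lemma avoid_apply (k : Fin (n + 1)) (i : Fin n) : avoid k i = (k.succAbove i).castSucc := rfl

lemma avoid_lt_last (k : Fin (n + 1)) (i : Fin n) : avoid k i < last (n + 1) :=
  castSucc_lt_last _

lemma avoid_ne_castSucc (k : Fin (n + 1)) (i : Fin n) : avoid k i ≠ k.castSucc :=
  fun h => succAbove_ne k i (castSucc_injective _ h)

lemma castSucc_lt_avoid_iff {k : Fin (n + 1)} {i : Fin n} :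
    k.castSucc < avoid k i ↔ k ≤ i.castSucc := by
  simp [avoid_apply, lt_succAbove_iff_le_castSucc]

lemma eq_last_or_eq_castSucc_or_exists_avoid (k : Fin (n + 1)) (x : Fin (n + 2)) :
    x = last (n + 1) ∨ x = k.castSucc ∨ ∃ i, x = avoid k i := by
  rcases x.eq_castSucc_or_eq_last with ⟨y, rfl⟩ | rfl
  · rcases eq_or_ne y k with rfl | hy
    · exact .inr (.inl rfl)
    · obtain ⟨i, rfl⟩ := exists_succAbove_eq hy
      exact .inr (.inr ⟨i, rfl⟩)
  · exact .inl rfl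

lemma sum_univ_eq_last_add_castSucc_add_avoid {M : Type*} [AddCommMonoid M] (k : Fin (n + 1))
    (f : Fin (n + 2) → M) :
    ∑ x, f x = f (last (n + 1)) + f k.castSucc + ∑ i, f (avoid k i) := by
  rw [sum_univ_castSucc, sum_univ_succAbove _ k]
  simp only [avoid_apply]
  abel

lemma card_filter_le_castSucc (k : Fin (n + 1)) :
    #{i : Fin n | k ≤ i.castSucc} = n - k := by
  have h := card_filter_add_card_filter_not (s := univ) (p := fun i : Fin n => (i : ℕ) < k)
  simp only [card_filter_val_lt, card_univ, Fintype.card_fin, not_lt] at h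
  simp only [le_def, val_castSucc]
  omega

end Fin

namespace Equiv.Perm
open Fin
variable {n : ℕ}

def insertPairFun (k : Fin (n + 1)) (f : Fin n → Fin n) : Fin (n + 2) → Fin (n + 2) :=
  snoc (k.insertNth (last (n + 1)) (fun i => avoid k (f i))) k.castSucc

@[simp] lemma insertPairFun_last (k : Fin (n + 1)) (f : Fin n → Fin n) :
    insertPairFun k f (last (n + 1)) = k.castSucc :=
  snoc_last ..

@[simp] lemma insertPairFun_castSucc (k : Fin (n + 1)) (f : Fin n → Fin n) :
    insertPairFun k f k.castSucc = last (n + 1) := by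
  simp [insertPairFun]

@[simp] lemma insertPairFun_avoid (k : Fin (n + 1)) (f : Fin n → Fin n) (i : Fin n) :
    insertPairFun k f (avoid k i) = avoid k (f i) := by
  simp [insertPairFun, avoid_apply]

def insertPair (k : Fin (n + 1)) (τ : Perm (Fin n)) : Perm (Fin (n + 2)) where
  toFun := insertPairFun k τ
  invFun := insertPairFun k τ.symm
  left_inv x := by
    rcases eq_last_or_eq_castSucc_or_exists_avoid k x with rfl | rfl | ⟨i, rfl⟩ <;> simp
  right_inv x := by
    rcases eq_last_or_eq_castSucc_or_exists_avoid k x with rfl | rfl | ⟨i, rfl⟩ <;> simp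

@[simp] lemma insertPair_last (k : Fin (n + 1)) (τ : Perm (Fin n)) :
    insertPair k τ (last (n + 1)) = k.castSucc :=
  insertPairFun_last k τ

@[simp] lemma insertPair_castSucc (k : Fin (n + 1)) (τ : Perm (Fin n)) :
    insertPair k τ k.castSucc = last (n + 1) :=
  insertPairFun_castSucc k τ

@[simp] lemma insertPair_avoid (k : Fin (n + 1)) (τ : Perm (Fin n)) (i : Fin n) :
    insertPair k τ (avoid k i) = avoid k (τ i) :=
  insertPairFun_avoid k τ i

lemma insertPair_mul_self {τ : Perm (Fin n)} (hτ : τ * τ = 1) (k : Fin (n + 1)) :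
    insertPair k τ * insertPair k τ = 1 := by
  ext x
  rcases eq_last_or_eq_castSucc_or_exists_avoid k x with rfl | rfl | ⟨i, rfl⟩ <;>
    simp_all [Perm.ext_iff]

lemma insertPair_apply_ne {τ : Perm (Fin n)} (hτ : ∀ i, τ i ≠ i) (k : Fin (n + 1))
    (x : Fin (n + 2)) : insertPair k τ x ≠ x := by
  rcases eq_last_or_eq_castSucc_or_exists_avoid k x with rfl | rfl | ⟨i, rfl⟩
  · simp [(castSucc_lt_last k).ne]
  · simp [(castSucc_lt_last k).ne']
  · simpa [(avoid k).injective.eq_iff] using hτ i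

lemma insertPair_injective :
    Function.Injective fun p : Fin (n + 1) × Perm (Fin n) => insertPair p.1 p.2 := by
  rintro ⟨k, τ⟩ ⟨k', τ'⟩ h
  have hk : k = k' := castSucc_injective _ <| by
    simpa using DFunLike.congr_fun h (last (n + 1))
  subst hk
  refine Prod.ext rfl (Equiv.ext fun i => (avoid k).injective ?_)
  simpa using DFunLike.congr_fun h (avoid k i)

lemma exists_insertPair {σ : Perm (Fin (n + 2))} (hσ : σ * σ = 1) (hfix : ∀ x, σ x ≠ x) :
    ∃ k τ, τ * τ = 1 ∧ (∀ i, τ i ≠ i) ∧ insertPair k τ = σ := by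
  have hσσ : ∀ x, σ (σ x) = x := by simpa [Perm.ext_iff] using hσ
  obtain ⟨k, hk⟩ := exists_castSucc_eq.mpr (hfix (last (n + 1)))
  have hkσ : σ k.castSucc = last (n + 1) := by rw [hk, hσσ]
  have h_avoid : ∀ i, ∃ j, σ (avoid k i) = avoid k j := fun i => by
    rcases eq_last_or_eq_castSucc_or_exists_avoid k (σ (avoid k i)) with h | h | h
    · exact absurd (by rw [← hσσ (avoid k i), h, hk]) (avoid_ne_castSucc k i)
    · exact absurd (by rw [← hσσ (avoid k i), h, hkσ]) (avoid_lt_last k i).ne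
    · exact h
  choose t ht using h_avoid
  have ht_inv : Function.Involutive t := fun i =>
    (avoid k).injective (by rw [← ht, ← ht, hσσ])
  refine ⟨k, ht_inv.toPerm t, ?_, fun i h => hfix (avoid k i) ?_, ?_⟩
  · ext i
    simp [ht_inv i]
  · rw [ht, show t i = i from h]
  · ext x
    rcases eq_last_or_eq_castSucc_or_exists_avoid k x with rfl | rfl | ⟨i, rfl⟩ <;>
      simp [← hk, hkσ, ht]

end Equiv.Perm

lemma invStat_eq_sum {m : ℕ} (σ : Equiv.Perm (Fin m)) :
    invStat σ = ∑ i, ∑ j, if i < j ∧ σ j < σ i then 1 else 0 := by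
  rw [invStat, card_filter, ← univ_product_univ, sum_product]

open Fin Equiv.Perm in
lemma invStat_insertPair {n : ℕ} (k : Fin (n + 1)) (τ : Equiv.Perm (Fin n)) :
    invStat (insertPair k τ) = invStat τ + 2 * (n - k) + 1 := by
  rw [invStat_eq_sum, invStat_eq_sum τ]
  simp only [sum_univ_eq_last_add_castSucc_add_avoid k, insertPair_last, insertPair_castSucc,
    insertPair_avoid, (avoid k).lt_iff_lt, castSucc_lt_avoid_iff, avoid_lt_last, castSucc_lt_last,
    not_lt.2 (le_last _), lt_irrefl, and_self, and_true, true_and, and_false, false_and,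
    if_true, if_false, zero_add, add_zero, sum_add_distrib]
  rw [Equiv.sum_comp τ fun i => if k ≤ i.castSucc then 1 else 0]
  simp only [sum_const_zero, sum_boole, Nat.cast_id, card_filter_le_castSucc]
  omega

lemma mem_FPFInvols {m : ℕ} {σ : Equiv.Perm (Fin m)} :
    σ ∈ FPFInvols m ↔ σ * σ = 1 ∧ ∀ i, σ i ≠ i := by
  simp [FPFInvols]

open Equiv.Perm in
lemma JPoly_add_two (n : ℕ) :
    JPoly (n + 2) = (∑ k : Fin (n + 1), X ^ (2 * (n - k) + 1)) * JPoly n := by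
  rw [JPoly, JPoly, sum_mul_sum, ← sum_product']
  refine (sum_nbij (fun p : Fin (n + 1) × Equiv.Perm (Fin n) => insertPair p.1 p.2) ?_
    insertPair_injective.injOn ?_ ?_).symm
  · rintro ⟨k, τ⟩ hτ
    simp only [mem_product, mem_FPFInvols] at hτ ⊢
    exact ⟨insertPair_mul_self hτ.2.1 k, insertPair_apply_ne hτ.2.2 k⟩
  · intro σ hσ
    rw [mem_coe, mem_FPFInvols] at hσ
    obtain ⟨k, τ, hτ, hfix, rfl⟩ := exists_insertPair hσ.1 hσ.2
    exact ⟨(k, τ), by simp [mem_FPFInvols, hτ, hfix], rfl⟩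
  · rintro ⟨k, τ⟩ -
    rw [invStat_insertPair, ← pow_add, add_right_comm, add_comm (invStat τ)]

lemma one_sub_sq_mul_sum_pow_odd {R : Type*} [CommRing R] (x : R) (n : ℕ) :
    (1 - x ^ 2) * ∑ k : Fin (n + 1), x ^ (2 * (n - k) + 1) = x * (1 - x ^ (2 * (n + 1))) := by
  rw [Fintype.sum_equiv Fin.revPerm _ (fun k : Fin (n + 1) => x ^ (2 * (k : ℕ) + 1))
      fun k => by simp [Fin.val_rev],
    Fin.sum_univ_eq_sum_range (fun k => x ^ (2 * k + 1)), pow_mul x 2 (n + 1),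
    ← mul_neg_geom_sum (x ^ 2), mul_left_comm x, mul_sum _ _ x]
  exact congrArg _ (sum_congr rfl fun i _ => by ring)

theorem fpf_involution_inversion_recurrence :
    (∀ n : ℕ, (1 - X ^ 2) * JPoly (n + 2) = X * (1 - X ^ (2 * (n + 1))) * JPoly n) ∧
    JPoly 0 = 1 := by
  refine ⟨fun n => ?_, ?_⟩
  · rw [JPoly_add_two, ← mul_assoc, one_sub_sq_mul_sum_pow_odd]
  · simp [JPoly, FPFInvols, invStat, filter_true_of_mem]
end
end

section
/- For every m ≥ 1, the inversion polynomial over fixed-point-free involutions of S_{2m} satisfies (1−q²)^{m−1} · J_{2m}^{inv}(q) = q^m · ∏_{i=1}^{m−1} (1 − q^{2(2i+1)}), where J_{2m}^{inv}(q) = Σ_{σ∈J_{2m}} q^{inv(σ)}. -/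
noncomputable section
open Finset Polynomial

variable {n : ℕ}

abbrev Pnj (j : Fin (n + 1)) : Fin (n + 2) → Prop :=
  fun x => x ≠ j.castSucc ∧ x ≠ Fin.last (n + 1)

/-- Embedding of `Fin n` into `Fin (n+2)` avoiding `j.castSucc` and `last`. -/
def embE (j : Fin (n + 1)) : Fin n ≃ { x : Fin (n + 2) // Pnj j x } :=
  (finSuccAboveEquiv j).trans
    { toFun := fun x => ⟨x.1.castSucc,
        by simpa [Fin.castSucc_inj] using x.2, (Fin.castSucc_lt_last x.1).ne⟩
      invFun := fun y => ⟨y.1.castPred y.2.2, fun h => y.2.1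
        (by rw [← Fin.castSucc_castPred y.1 y.2.2, h])⟩
      left_inv := fun x => by simp
      right_inv := fun y => by simp [Fin.castSucc_castPred] }

lemma embE_apply (j : Fin (n + 1)) (i : Fin n) :
    (embE j i : Fin (n + 2)) = (j.succAbove i).castSucc := rfl

def involAdd (j : Fin (n + 1)) (σ : Equiv.Perm (Fin n)) : Equiv.Perm (Fin (n + 2)) :=
  (σ.extendDomain (embE j)) * Equiv.swap j.castSucc (Fin.last (n + 1))

lemma involAdd_apply_last (j : Fin (n + 1)) (σ : Equiv.Perm (Fin n)) :
    involAdd j σ (Fin.last (n + 1)) = j.castSucc := by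
  have h : ¬ Pnj j j.castSucc := by simp [Pnj]
  simp only [involAdd, Equiv.Perm.mul_apply, Equiv.swap_apply_right]
  exact Equiv.Perm.extendDomain_apply_not_subtype _ _ h

lemma involAdd_apply_castSucc (j : Fin (n + 1)) (σ : Equiv.Perm (Fin n)) :
    involAdd j σ j.castSucc = Fin.last (n + 1) := by
  have h : ¬ Pnj j (Fin.last (n + 1)) := by simp [Pnj]
  simp only [involAdd, Equiv.Perm.mul_apply, Equiv.swap_apply_left]
  exact Equiv.Perm.extendDomain_apply_not_subtype _ _ h

lemma involAdd_apply_emb (j : Fin (n + 1)) (σ : Equiv.Perm (Fin n)) (i : Fin n) :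
    involAdd j σ ((j.succAbove i).castSucc) = (j.succAbove (σ i)).castSucc := by
  have h1 : (j.succAbove i).castSucc ≠ j.castSucc := by
    simp [Fin.castSucc_inj, j.succAbove_ne i]
  have h2 : (j.succAbove i).castSucc ≠ Fin.last (n+1) := (Fin.castSucc_lt_last _).ne
  have hs : Equiv.swap j.castSucc (Fin.last (n+1)) ((j.succAbove i).castSucc)
      = (j.succAbove i).castSucc := Equiv.swap_apply_of_ne_of_ne h1 h2
  have hp : Pnj j ((j.succAbove i).castSucc) := ⟨h1, h2⟩
  simp only [involAdd, Equiv.Perm.mul_apply, hs]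
  rw [σ.extendDomain_apply_subtype (embE j) hp]
  have : (embE j).symm ⟨(j.succAbove i).castSucc, hp⟩ = i := by
    apply (embE j).injective
    rw [Equiv.apply_symm_apply]
    rfl
  rw [this]
  rfl
variable {n : ℕ}

lemma fin_tricho (j : Fin (n + 1)) (x : Fin (n + 2)) :
    x = j.castSucc ∨ x = Fin.last (n + 1) ∨ ∃ i, x = (j.succAbove i).castSucc := by
  rcases eq_or_ne x (Fin.last (n + 1)) with h | h
  · exact Or.inr (Or.inl h)
  rcases eq_or_ne (x.castPred h) j with h2 | h2
  · exact Or.inl (by rw [← h2, Fin.castSucc_castPred])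
  · obtain ⟨i, hi⟩ := Fin.exists_succAbove_eq h2
    exact Or.inr (Or.inr ⟨i, by rw [hi, Fin.castSucc_castPred]⟩)

lemma lt_succAbove_iff' (j : Fin (n + 1)) (i : Fin n) :
    j < j.succAbove i ↔ (j : ℕ) ≤ (i : ℕ) := by
  rcases lt_or_ge (i.castSucc) j with h | h
  · rw [Fin.succAbove_of_castSucc_lt _ _ h]
    simp only [Fin.lt_def, Fin.coe_castSucc] at h ⊢
    omega
  · rw [Fin.succAbove_of_le_castSucc _ _ h]
    simp only [Fin.lt_def, Fin.le_def, Fin.coe_castSucc, Fin.val_succ] at h ⊢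
    omega

lemma card_filter_le_val (c : ℕ) (hc : c ≤ n) :
    (Finset.univ.filter fun i : Fin n => c ≤ (i : ℕ)).card = n - c := by
  rw [← Nat.card_Ico c n]
  refine Finset.card_bij' (fun (a : Fin n) _ => (a : ℕ))
    (fun b hb => ⟨b, (Finset.mem_Ico.mp hb).2⟩) ?_ ?_ ?_ ?_
  · intro a ha
    simp only [Finset.mem_filter, Finset.mem_univ, true_and] at ha
    exact Finset.mem_Ico.mpr ⟨ha, a.isLt⟩
  · intro b hb
    simp only [Finset.mem_filter, Finset.mem_univ, true_and]
    exact (Finset.mem_Ico.mp hb).1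
  · intro a _; rfl
  · intro b _; rfl

lemma card_filter_le_perm (σ : Equiv.Perm (Fin n)) (c : ℕ) :
    (Finset.univ.filter fun i : Fin n => c ≤ (σ i : ℕ)).card
      = (Finset.univ.filter fun i : Fin n => c ≤ (i : ℕ)).card := by
  refine Finset.card_bij' (fun a _ => σ a) (fun b _ => σ.symm b) ?_ ?_ ?_ ?_
  · intro a ha
    simpa using (Finset.mem_filter.mp ha).2
  · intro b hb
    simp only [Finset.mem_filter, Finset.mem_univ, true_and, Equiv.apply_symm_apply]
    simpa using (Finset.mem_filter.mp hb).2
  · intro a _; simp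
  · intro b _; simp

lemma invStat_involAdd (j : Fin (n + 1)) (σ : Equiv.Perm (Fin n)) :
    invStat (involAdd j σ) = invStat σ + (2 * (n - (j : ℕ)) + 1) := by
  classical
  set a : Fin (n + 2) := j.castSucc with ha
  set b : Fin (n + 2) := Fin.last (n + 1) with hb
  set E : Fin n → Fin (n + 2) := fun i => (j.succAbove i).castSucc with hE
  set τ := involAdd j σ with hτ
  have hτb : τ b = a := involAdd_apply_last j σ
  have hτa : τ a = b := involAdd_apply_castSucc j σ
  have hτE : ∀ i, τ (E i) = E (σ i) := fun i => involAdd_apply_emb j σ i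
  have hEa : ∀ i, E i ≠ a := fun i => by
    simp [hE, ha, Fin.castSucc_inj, j.succAbove_ne i]
  have hEb : ∀ i, E i ≠ b := fun i => (Fin.castSucc_lt_last _).ne
  have hElt : ∀ i k, E i < E k ↔ i < k := fun i k => by
    rw [hE]
    simp only [Fin.castSucc_lt_castSucc_iff]
    exact Fin.succAbove_lt_succAbove_iff
  have hEinj : Function.Injective E := fun i k h => by
    rcases lt_trichotomy i k with h' | h' | h'
    · exact absurd h ((hElt i k).mpr h').ne
    · exact h'
    · exact absurd h.symm ((hElt k i).mpr h').ne
  have haE : ∀ i, a < E i ↔ (j : ℕ) ≤ (i : ℕ) := fun i => by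
    rw [ha, hE, Fin.castSucc_lt_castSucc_iff]
    exact lt_succAbove_iff' j i
  have hEltb : ∀ i, E i < b := fun i => Fin.castSucc_lt_last _
  have hab : a < b := Fin.castSucc_lt_last _
  set A := ((Finset.univ : Finset (Fin n × Fin n)).filter
      (fun p => p.1 < p.2 ∧ σ p.2 < σ p.1)).image (fun p => (E p.1, E p.2)) with hA
  set B := (Finset.univ.filter fun i : Fin n => (j : ℕ) ≤ (σ i : ℕ)).image
      (fun i => (E i, b)) with hB
  set C := (Finset.univ.filter fun i : Fin n => (j : ℕ) ≤ (i : ℕ)).image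
      (fun i => (a, E i)) with hC
  set D : Finset (Fin (n+2) × Fin (n+2)) := {(a, b)} with hD
  have hset : (Finset.univ : Finset (Fin (n+2) × Fin (n+2))).filter
      (fun p => p.1 < p.2 ∧ τ p.2 < τ p.1) = A ∪ B ∪ C ∪ D := by
    ext ⟨x, y⟩
    rw [Finset.mem_filter]
    constructor
    · rintro ⟨-, hxy, hinv⟩
      rcases fin_tricho j x with rfl | rfl | ⟨i, rfl⟩ <;>
        rcases fin_tricho j y with rfl | rfl | ⟨k, rfl⟩
      · exact absurd hxy (lt_irrefl _)
      · exact Finset.mem_union_right _ (Finset.mem_singleton.mpr rfl)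
      · refine Finset.mem_union_left _ (Finset.mem_union_right _ ?_)
        refine Finset.mem_image.mpr ⟨k, ?_, rfl⟩
        simp only [Finset.mem_filter, Finset.mem_univ, true_and]
        exact (haE k).mp hxy
      · exact absurd (hxy.trans hab) (lt_irrefl _)
      · exact absurd hxy (lt_irrefl _)
      · exact absurd (hxy.trans (hEltb k)) (lt_irrefl _)
      · rw [hτa, hτE] at hinv
        exact absurd (hinv.trans (hEltb _)) (lt_irrefl _)
      · refine Finset.mem_union_left _ (Finset.mem_union_left _
          (Finset.mem_union_right _ ?_))
        refine Finset.mem_image.mpr ⟨i, ?_, rfl⟩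
        simp only [Finset.mem_filter, Finset.mem_univ, true_and]
        rw [hτb, hτE] at hinv
        exact (haE _).mp hinv
      · refine Finset.mem_union_left _ (Finset.mem_union_left _
          (Finset.mem_union_left _ ?_))
        rw [hτE, hτE] at hinv
        refine Finset.mem_image.mpr ⟨(i, k), ?_, rfl⟩
        simp only [Finset.mem_filter, Finset.mem_univ, true_and]
        exact ⟨(hElt i k).mp hxy, (hElt _ _).mp hinv⟩
    · intro h
      refine ⟨Finset.mem_univ _, ?_⟩
      rcases Finset.mem_union.mp h with h | h
      · rcases Finset.mem_union.mp h with h | h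
        · rcases Finset.mem_union.mp h with h | h
          · obtain ⟨p, hp, hEq⟩ := Finset.mem_image.mp h
            obtain ⟨h1, h2⟩ := Prod.mk.injEq .. ▸ hEq
            simp only [Finset.mem_filter, Finset.mem_univ, true_and] at hp
            rw [← h1, ← h2, hτE, hτE]
            exact ⟨(hElt _ _).mpr hp.1, (hElt _ _).mpr hp.2⟩
          · obtain ⟨i, hi, hEq⟩ := Finset.mem_image.mp h
            obtain ⟨h1, h2⟩ := Prod.mk.injEq .. ▸ hEq
            simp only [Finset.mem_filter, Finset.mem_univ, true_and] at hi
            rw [← h1, ← h2, hτb, hτE]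
            exact ⟨hEltb i, (haE _).mpr hi⟩
        · obtain ⟨i, hi, hEq⟩ := Finset.mem_image.mp h
          obtain ⟨h1, h2⟩ := Prod.mk.injEq .. ▸ hEq
          simp only [Finset.mem_filter, Finset.mem_univ, true_and] at hi
          rw [← h1, ← h2, hτa, hτE]
          exact ⟨(haE i).mpr hi, hEltb _⟩
      · obtain ⟨h1, h2⟩ := Prod.mk.injEq .. ▸ Finset.mem_singleton.mp h
        rw [h1, h2, hτa, hτb]
        exact ⟨hab, hab⟩
  have hdAB : Disjoint A B := by
    rw [Finset.disjoint_left]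
    intro p hpA hpB
    obtain ⟨q, -, hq⟩ := Finset.mem_image.mp hpA
    obtain ⟨i, -, hi⟩ := Finset.mem_image.mp hpB
    exact hEb q.2 ((congrArg Prod.snd hq).trans (congrArg Prod.snd hi).symm)
  have hdABC : Disjoint (A ∪ B) C := by
    rw [Finset.disjoint_left]
    intro p hpAB hpC
    obtain ⟨i, -, hi⟩ := Finset.mem_image.mp hpC
    rcases Finset.mem_union.mp hpAB with h | h
    · obtain ⟨q, -, hq⟩ := Finset.mem_image.mp h
      exact hEa q.1 ((congrArg Prod.fst hq).trans (congrArg Prod.fst hi).symm)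
    · obtain ⟨k, -, hk⟩ := Finset.mem_image.mp h
      exact hEa k ((congrArg Prod.fst hk).trans (congrArg Prod.fst hi).symm)
  have hdABCD : Disjoint (A ∪ B ∪ C) D := by
    rw [Finset.disjoint_left]
    intro p hpABC hpD
    have hpD' : (a, b) = p := (Finset.mem_singleton.mp hpD).symm
    rcases Finset.mem_union.mp hpABC with h | h
    · rcases Finset.mem_union.mp h with h | h
      · obtain ⟨q, -, hq⟩ := Finset.mem_image.mp h
        exact hEb q.2 ((congrArg Prod.snd hq).trans (congrArg Prod.snd hpD').symm)
      · obtain ⟨k, -, hk⟩ := Finset.mem_image.mp h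
        exact hEa k ((congrArg Prod.fst hk).trans (congrArg Prod.fst hpD').symm)
    · obtain ⟨i, -, hi⟩ := Finset.mem_image.mp h
      exact hEb i ((congrArg Prod.snd hi).trans (congrArg Prod.snd hpD').symm)
  have hcA : A.card = invStat σ := by
    rw [hA, Finset.card_image_of_injective]
    · rfl
    · intro p q h
      rw [Prod.mk.injEq] at h
      exact Prod.ext (hEinj h.1) (hEinj h.2)
  have hcB : B.card = n - (j : ℕ) := by
    rw [hB, Finset.card_image_of_injective, card_filter_le_perm σ,
      card_filter_le_val _ (by omega)]
    intro p q h
    rw [Prod.mk.injEq] at h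
    exact hEinj h.1
  have hcC : C.card = n - (j : ℕ) := by
    rw [hC, Finset.card_image_of_injective, card_filter_le_val _ (by omega)]
    intro p q h
    rw [Prod.mk.injEq] at h
    exact hEinj h.2
  have : invStat τ = A.card + B.card + C.card + D.card := by
    rw [invStat, hset, Finset.card_union_of_disjoint hdABCD,
      Finset.card_union_of_disjoint hdABC, Finset.card_union_of_disjoint hdAB]
  rw [this, hcA, hcB, hcC, hD]
  simp only [Finset.card_singleton]
  omega

lemma involAdd_sq (j : Fin (n + 1)) (σ : Equiv.Perm (Fin n)) (h1 : ∀ i, σ (σ i) = i) :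
    ∀ x, involAdd j σ (involAdd j σ x) = x := by
  intro x
  rcases fin_tricho j x with rfl | rfl | ⟨i, rfl⟩
  · rw [involAdd_apply_castSucc, involAdd_apply_last]
  · rw [involAdd_apply_last, involAdd_apply_castSucc]
  · rw [involAdd_apply_emb, involAdd_apply_emb, h1]

lemma involAdd_fpf (j : Fin (n + 1)) (σ : Equiv.Perm (Fin n)) (h2 : ∀ i, σ i ≠ i) :
    ∀ x, involAdd j σ x ≠ x := by
  intro x
  rcases fin_tricho j x with rfl | rfl | ⟨i, rfl⟩
  · rw [involAdd_apply_castSucc]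
    exact (Fin.castSucc_lt_last _).ne'
  · rw [involAdd_apply_last]
    exact (Fin.castSucc_lt_last _).ne
  · rw [involAdd_apply_emb]
    intro h
    rw [Fin.castSucc_inj] at h
    exact h2 i (Fin.succAbove_right_injective h)

def delFun (j : Fin (n + 1)) (τ : Equiv.Perm (Fin (n + 2))) (hτ : ∀ x, τ (τ x) = x)
    (hj : τ (Fin.last (n + 1)) = j.castSucc) : Fin n → Fin n := fun i =>
  (embE j).symm ⟨τ (embE j i).1,
    fun h => (embE j i).2.2 (by
      have h2 := congrArg τ h
      rw [hτ, ← hj, hτ] at h2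
      exact h2),
    fun h => (embE j i).2.1 (by
      have h2 := congrArg τ h
      rw [hτ, hj] at h2
      exact h2)⟩

lemma delFun_spec (j : Fin (n + 1)) (τ : Equiv.Perm (Fin (n + 2))) (hτ : ∀ x, τ (τ x) = x)
    (hj : τ (Fin.last (n + 1)) = j.castSucc) (i : Fin n) :
    ((j.succAbove (delFun j τ hτ hj i)).castSucc : Fin (n + 2))
      = τ ((j.succAbove i).castSucc) := by
  show ((embE j) (delFun j τ hτ hj i)).1 = _
  rw [delFun, Equiv.apply_symm_apply]
  rfl

lemma delFun_invol (j : Fin (n + 1)) (τ : Equiv.Perm (Fin (n + 2))) (hτ : ∀ x, τ (τ x) = x)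
    (hj : τ (Fin.last (n + 1)) = j.castSucc) (i : Fin n) :
    delFun j τ hτ hj (delFun j τ hτ hj i) = i := by
  have hinj : Function.Injective fun i : Fin n => ((j.succAbove i).castSucc : Fin (n + 2)) :=
    fun p q h => Fin.succAbove_right_injective (Fin.castSucc_inj.mp h)
  apply hinj
  show ((j.succAbove _).castSucc : Fin (n+2)) = _
  rw [delFun_spec, delFun_spec, hτ]

def delInvolAux (j : Fin (n + 1)) (τ : Equiv.Perm (Fin (n + 2))) (hτ : ∀ x, τ (τ x) = x)
    (hj : τ (Fin.last (n + 1)) = j.castSucc) : Equiv.Perm (Fin n) :=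
  ⟨delFun j τ hτ hj, delFun j τ hτ hj, delFun_invol j τ hτ hj, delFun_invol j τ hτ hj⟩

lemma delInvolAux_apply_emb (j : Fin (n + 1)) (τ : Equiv.Perm (Fin (n + 2)))
    (hτ : ∀ x, τ (τ x) = x) (hj : τ (Fin.last (n + 1)) = j.castSucc) (i : Fin n) :
    ((j.succAbove (delInvolAux j τ hτ hj i)).castSucc : Fin (n + 2))
      = τ ((j.succAbove i).castSucc) := delFun_spec j τ hτ hj i

lemma involAdd_delInvolAux (j : Fin (n + 1)) (τ : Equiv.Perm (Fin (n + 2)))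
    (hτ : ∀ x, τ (τ x) = x) (hj : τ (Fin.last (n + 1)) = j.castSucc) :
    involAdd j (delInvolAux j τ hτ hj) = τ := by
  apply Equiv.ext
  intro x
  rcases fin_tricho j x with rfl | rfl | ⟨i, rfl⟩
  · rw [involAdd_apply_castSucc, ← hj, hτ]
  · rw [involAdd_apply_last, hj]
  · rw [involAdd_apply_emb, delInvolAux_apply_emb]

lemma delInvolAux_involAdd (j : Fin (n + 1)) (σ : Equiv.Perm (Fin n))
    (hτ : ∀ x, involAdd j σ (involAdd j σ x) = x)
    (hj : involAdd j σ (Fin.last (n + 1)) = j.castSucc) :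
    delInvolAux j (involAdd j σ) hτ hj = σ := by
  apply Equiv.ext
  intro i
  have hinj : Function.Injective fun i : Fin n => ((j.succAbove i).castSucc : Fin (n + 2)) :=
    fun p q h => Fin.succAbove_right_injective (Fin.castSucc_inj.mp h)
  apply hinj
  show ((j.succAbove _).castSucc : Fin (n+2)) = _
  rw [delInvolAux_apply_emb, involAdd_apply_emb]

lemma delInvolAux_fpf (j : Fin (n + 1)) (τ : Equiv.Perm (Fin (n + 2)))
    (hτ : ∀ x, τ (τ x) = x) (hj : τ (Fin.last (n + 1)) = j.castSucc)
    (hf : ∀ x, τ x ≠ x) (i : Fin n) : delInvolAux j τ hτ hj i ≠ i := by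
  intro h
  have := delInvolAux_apply_emb j τ hτ hj i
  rw [h] at this
  exact hf _ this.symm

lemma perm_sq_iff (σ : Equiv.Perm (Fin n)) : σ * σ = 1 ↔ ∀ x, σ (σ x) = x := by
  constructor
  · intro h x
    have := Equiv.Perm.ext_iff.mp h x
    simpa using this
  · intro h
    ext x
    simp [Equiv.Perm.mul_apply, h x]

lemma roundtrip1 (j : Fin (n + 1)) (σ : Equiv.Perm (Fin n))
    (hsq : ∀ x, involAdd j σ (involAdd j σ x) = x)
    (pf : involAdd j σ (Fin.last (n + 1)) ≠ Fin.last (n + 1))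
    (hj' : involAdd j σ (Fin.last (n + 1))
      = (((involAdd j σ) (Fin.last (n + 1))).castPred pf).castSucc) :
    (((involAdd j σ) (Fin.last (n + 1))).castPred pf,
      delInvolAux _ (involAdd j σ) hsq hj') = (j, σ) := by
  have hjj : ((involAdd j σ) (Fin.last (n + 1))).castPred pf = j := by
    simp [involAdd_apply_last]
  refine Prod.ext hjj ?_
  show delInvolAux _ (involAdd j σ) hsq hj' = σ
  revert hj'
  rw [hjj]
  intro hj'
  exact delInvolAux_involAdd j σ hsq _

lemma JPoly_rec (n : ℕ) :
    JPoly (n + 2) = (∑ k ∈ Finset.range (n + 1), (X : ℚ[X]) ^ (2 * k + 1)) * JPoly n := by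
  have key : ∑ τ ∈ FPFInvols (n + 2), (X : ℚ[X]) ^ invStat τ
      = ∑ p ∈ (Finset.univ : Finset (Fin (n + 1))) ×ˢ FPFInvols n,
          (X : ℚ[X]) ^ (invStat p.2 + (2 * (n - (p.1 : ℕ)) + 1)) := by
    refine (Finset.sum_bij' (fun p _ => involAdd p.1 p.2)
      (fun τ hτ => (((τ (Fin.last (n + 1))).castPred ((Finset.mem_filter.mp hτ).2.2 _)),
        delInvolAux _ τ ((perm_sq_iff τ).mp (Finset.mem_filter.mp hτ).2.1)
          (Fin.castSucc_castPred (τ (Fin.last (n + 1)))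
            ((Finset.mem_filter.mp hτ).2.2 _)).symm))
      ?_ ?_ ?_ ?_ ?_).symm
    · -- maps into FPF (n+2)
      intro p hp
      rw [Finset.mem_product] at hp
      have hm := Finset.mem_filter.mp hp.2
      refine Finset.mem_filter.mpr ⟨Finset.mem_univ _, ?_, ?_⟩
      · exact (perm_sq_iff _).mpr (involAdd_sq p.1 p.2 ((perm_sq_iff _).mp hm.2.1))
      · exact involAdd_fpf p.1 p.2 hm.2.2
    · -- maps into product
      intro τ hτ
      have hm := Finset.mem_filter.mp hτ
      have hsq : ∀ x, τ (τ x) = x := (perm_sq_iff τ).mp hm.2.1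
      rw [Finset.mem_product]
      refine ⟨Finset.mem_univ _, Finset.mem_filter.mpr ⟨Finset.mem_univ _, ?_, ?_⟩⟩
      · exact (perm_sq_iff _).mpr (fun i => delFun_invol _ τ hsq
          (Fin.castSucc_castPred _ (hm.2.2 _)).symm i)
      · exact delInvolAux_fpf _ τ hsq (Fin.castSucc_castPred _ (hm.2.2 _)).symm hm.2.2
    · -- left inverse
      intro p hp
      exact (roundtrip1 p.1 p.2 _ _ _).trans rfl
    · -- right inverse
      intro τ hτ
      exact involAdd_delInvolAux _ τ _ _
    · -- values
      intro p hp
      rw [invStat_involAdd]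
  rw [JPoly, key, Finset.sum_product,
    Fin.sum_univ_eq_sum_range
      (fun j => ∑ σ ∈ FPFInvols n, (X : ℚ[X]) ^ (invStat σ + (2 * (n - j) + 1))),
    Finset.sum_mul,
    ← Finset.sum_range_reflect (fun k => (X : ℚ[X]) ^ (2 * k + 1) * JPoly n)]
  refine Finset.sum_congr rfl (fun k _ => ?_)
  rw [JPoly, Finset.mul_sum]
  refine Finset.sum_congr rfl (fun σ _ => ?_)
  rw [← pow_add]
  congr 1
  omega

lemma JPoly_zero : JPoly 0 = 1 := by
  have h1 : FPFInvols 0 = {1} := by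
    apply Finset.eq_singleton_iff_unique_mem.mpr
    constructor
    · exact Finset.mem_filter.mpr ⟨Finset.mem_univ _, mul_one 1, fun i => i.elim0⟩
    · intro σ _
      exact Subsingleton.elim σ 1
  have h2 : invStat (1 : Equiv.Perm (Fin 0)) = 0 := by
    simp [invStat]
  rw [JPoly, h1, Finset.sum_singleton, h2, pow_zero]

lemma JPoly_two : JPoly 2 = X := by
  have := JPoly_rec 0
  rw [show (0 + 2 : ℕ) = 2 from rfl, JPoly_zero, mul_one] at this
  rw [this]
  simp

lemma geom_helper (N : ℕ) :
    (1 - X ^ 2 : ℚ[X]) * (∑ k ∈ Finset.range N, (X : ℚ[X]) ^ (2 * k + 1))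
      = X * (1 - X ^ (2 * N)) := by
  have h1 : ∀ k, (X : ℚ[X]) ^ (2 * k + 1) = X * (X ^ 2) ^ k := fun k => by
    rw [← pow_mul, pow_succ, mul_comm]
  have h2 := geom_sum_mul (X ^ 2 : ℚ[X]) N
  have hS : (∑ k ∈ Finset.range N, (X : ℚ[X]) ^ (2 * k + 1))
      = X * ∑ k ∈ Finset.range N, ((X : ℚ[X]) ^ 2) ^ k := by
    rw [Finset.mul_sum]
    exact Finset.sum_congr rfl (fun k _ => h1 k)
  rw [hS, pow_mul]
  linear_combination (-X : ℚ[X]) * h2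

theorem fpf_involution_inversion_closed_form (m : ℕ) (hm : 1 ≤ m) :
    (1 - X ^ 2) ^ (m - 1) * JPoly (2 * m) =
      X ^ m * ∏ i ∈ Finset.Icc 1 (m - 1), (1 - X ^ (2 * (2 * i + 1))) := by
  induction m, hm using Nat.le_induction with
  | base =>
    rw [show (1 - 1 : ℕ) = 0 from rfl, pow_zero, one_mul, show (2 * 1 : ℕ) = 2 from rfl,
      JPoly_two, Finset.Icc_eq_empty (by omega), Finset.prod_empty, mul_one, pow_one]
  | succ m hm ih =>
    have h2m : 2 * (m + 1) = 2 * m + 2 := by ring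
    have hpow : (1 - X ^ 2 : ℚ[X]) ^ m = (1 - X ^ 2) ^ (m - 1) * (1 - X ^ 2) := by
      rw [← pow_succ]
      congr 1
      omega
    rw [Nat.add_sub_cancel, h2m, JPoly_rec (2 * m), hpow]
    have hgeom := geom_helper (2 * m + 1)
    calc (1 - X ^ 2 : ℚ[X]) ^ (m - 1) * (1 - X ^ 2)
          * ((∑ k ∈ Finset.range (2 * m + 1), (X : ℚ[X]) ^ (2 * k + 1)) * JPoly (2 * m))
        = ((1 - X ^ 2 : ℚ[X]) * ∑ k ∈ Finset.range (2 * m + 1), (X : ℚ[X]) ^ (2 * k + 1))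
          * ((1 - X ^ 2) ^ (m - 1) * JPoly (2 * m)) := by ring
      _ = (X * (1 - X ^ (2 * (2 * m + 1))))
          * (X ^ m * ∏ i ∈ Finset.Icc 1 (m - 1), (1 - X ^ (2 * (2 * i + 1)))) := by
          rw [hgeom, ih]
      _ = X ^ (m + 1) * ((∏ i ∈ Finset.Icc 1 (m - 1), (1 - X ^ (2 * (2 * i + 1))))
          * (1 - X ^ (2 * (2 * m + 1)))) := by ring
      _ = X ^ (m + 1) * ∏ i ∈ Finset.Icc 1 m, (1 - X ^ (2 * (2 * i + 1))) := by
          congr 1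
          have hm' : m - 1 + 1 = m := by omega
          conv_rhs => rw [← hm', Finset.prod_Icc_succ_top (by omega : 1 ≤ m - 1 + 1)]
          rw [hm']
end
end
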